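/- arXiv:2312.15261 — 11 statements merged into one kernel-verified Lean document; each statement's English description precedes it below -/
import Mathlib

section
/- Let n ≥ 1 and let U₁, …, Uₙ be ultrafilters on ℕ. Set I = {A ⊆ ℕ : ℕ∖A ∈ U₁ ∩ … ∩ Uₙ}, the dual ideal of the filter U₁ ∩ … ∩ Uₙ. Then for each i with 1 ≤ i ≤ n, the ultrafilter Uᵢ has the I-p.i.p.; in particular, (Uᵢ, ⊇)^ω ≤_T (Uᵢ, ⊇) × (U₁ ∩ … ∩ Uₙ, ⊇)^ω. -/
open Set Filter

/-- A subset of a preorder is unbounded if it has no upper bound. -/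
def IsUnboundedSet {α : Type*} [Preorder α] (A : Set α) : Prop :=
  ¬ ∃ b, ∀ a ∈ A, a ≤ b

/-- A map between preorders is unbounded if it sends unbounded sets to unbounded sets. -/
def IsUnboundedMap {α β : Type*} [Preorder α] [Preorder β] (f : α → β) : Prop :=
  ∀ A : Set α, IsUnboundedSet A → IsUnboundedSet (f '' A)

/-- Tukey order: `α ≤_T β` iff there is an unbounded map `α → β`. -/
def TukeyLE (α β : Type*) [Preorder α] [Preorder β] : Prop :=
  ∃ f : α → β, IsUnboundedMap f

/-- Tukey equivalence. -/
def TukeyEquiv (α β : Type*) [Preorder α] [Preorder β] : Prop :=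
  TukeyLE α β ∧ TukeyLE β α

/-- The poset of a family of sets, ordered by reverse inclusion (used for filters). -/
abbrev RevPoset {S : Type*} (C : Set (Set S)) : Type _ := ({A : Set S // A ∈ C})ᵒᵈ

/-- The poset of a family of sets, ordered by inclusion (used for ideals). -/
abbrev InclPoset {S : Type*} (C : Set (Set S)) : Type _ := {A : Set S // A ∈ C}

/-- The poset `(U, ⊇)` of an ultrafilter. -/
abbrev UltraPoset {S : Type*} (U : Ultrafilter S) : Type _ := RevPoset {A : Set S | A ∈ U}

/-- An ultrafilter on ℕ is nonprincipal if it contains no singleton. -/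
def Nonprincipal (U : Ultrafilter ℕ) : Prop := ∀ n : ℕ, ({n} : Set ℕ) ∉ U

/-- The Fubini product `U · V`, as a family of subsets of `ℕ × ℕ`. -/
def fubiniSets (U V : Ultrafilter ℕ) : Set (Set (ℕ × ℕ)) :=
  {A | {n | {m | (n, m) ∈ A} ∈ V} ∈ U}

/-- `F` has the `T`-pseudo-intersection property. -/
def HasPIP (F : Filter ℕ) (T : Set (Set ℕ)) : Prop :=
  ∀ X : ℕ → Set ℕ, (∀ n, X n ∈ F) → ∃ Y ∈ F, ∀ n, ∃ t ∈ T, Y \ X n ⊆ t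

/-- Each of finitely many ultrafilters `U₁,…,Uₙ` has the `(U₁ ∩ … ∩ Uₙ)*`-p.i.p.; in
particular `Uᵢ^ω ≤_T Uᵢ × (U₁ ∩ … ∩ Uₙ)^ω`. -/
theorem stmt3 (n : ℕ) (hn : 1 ≤ n) (U : Fin n → Ultrafilter ℕ) (i : Fin n) :
    HasPIP (U i) {A : Set ℕ | ∀ j, Aᶜ ∈ U j} ∧
      TukeyLE (ℕ → UltraPoset (U i))
        (UltraPoset (U i) × (ℕ → RevPoset {A : Set ℕ | ∀ j, A ∈ U j})) := by

  classical
  have hsep : ∀ j : Fin n, ∃ S : Set ℕ, S ∈ U i ∧ (U j = U i ∨ Sᶜ ∈ U j) := by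
    intro j
    by_cases h : U j = U i
    · exact ⟨Set.univ, univ_mem, Or.inl h⟩
    · have hnle : ¬ (U j : Filter ℕ) ≤ (U i : Filter ℕ) := by
        intro hle
        exact h (Ultrafilter.coe_injective (Ultrafilter.unique (U i) hle).symm ▸ rfl)
      rw [Filter.le_def] at hnle
      push_neg at hnle
      obtain ⟨S, hS, hS'⟩ := hnle
      exact ⟨S, hS, Or.inr ((Ultrafilter.compl_mem_iff_notMem).2 hS')⟩
  choose S hS1 hS2 using hsep
  set Y : Set ℕ := ⋂ j, S j with hYdef
  have hY : Y ∈ U i := by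
    show (⋂ j, S j) ∈ (U i : Filter ℕ)
    exact iInter_mem.2 hS1
  have key : ∀ (j : Fin n) (T : Set ℕ), T ∈ U i → Yᶜ ∪ T ∈ U j := by
    intro j T hT
    rcases hS2 j with h | h
    · exact mem_of_superset (h ▸ hT) subset_union_right
    · exact mem_of_superset h
        ((compl_subset_compl.2 (iInter_subset S j)).trans subset_union_left)
  constructor
  · intro X hX
    refine ⟨Y, hY, fun m => ⟨Y \ X m, ?_, subset_rfl⟩⟩
    intro j
    have hc : (Y \ X m)ᶜ = Yᶜ ∪ X m := by
      rw [Set.diff_eq, Set.compl_inter, compl_compl]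
    show (Y \ X m)ᶜ ∈ U j
    rw [hc]
    exact key j _ (hX m)
  · refine ⟨fun X => (OrderDual.toDual ⟨Y, hY⟩,
      fun m => OrderDual.toDual ⟨Yᶜ ∪ (OrderDual.ofDual (X m)).1,
        fun j => key j _ (OrderDual.ofDual (X m)).2⟩), ?_⟩
    intro A hA hb
    apply hA
    obtain ⟨⟨B, W⟩, hb⟩ := hb
    refine ⟨fun m => OrderDual.toDual ⟨(OrderDual.ofDual B).1 ∩ (OrderDual.ofDual (W m)).1,
      inter_mem (OrderDual.ofDual B).2 ((OrderDual.ofDual (W m)).2 i)⟩, ?_⟩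
    intro X hX m
    have h1 := hb _ ⟨X, hX, rfl⟩
    have hB : (OrderDual.ofDual B).1 ⊆ Y := h1.1
    have hW : (OrderDual.ofDual (W m)).1 ⊆ Yᶜ ∪ (OrderDual.ofDual (X m)).1 := h1.2 m
    show (OrderDual.ofDual B).1 ∩ (OrderDual.ofDual (W m)).1 ⊆ (OrderDual.ofDual (X m)).1
    intro x hx
    rcases hW hx.2 with h | h
    · exact absurd (hB hx.1) h
    · exact h
end

section
/- Let ⟨Uₙ : n∈ℕ⟩ be a discrete sequence of ultrafilters on ℕ. Then the filter ⋂ₙ Uₙ, viewed as the poset (⋂ₙ Uₙ, ⊇), is Tukey equivalent to the product ∏ₙ (Uₙ, ⊇) with the pointwise order. -/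
open Set Filter

/-- A sequence of ultrafilters is discrete if there are pairwise disjoint sets `Aₙ ∈ Uₙ`. -/
def DiscreteSeq (U : ℕ → Ultrafilter ℕ) : Prop :=
  ∃ A : ℕ → Set ℕ, (∀ n m, n ≠ m → Disjoint (A n) (A m)) ∧ ∀ n, A n ∈ U n

/-- For a discrete sequence of ultrafilters, `⋂ₙ Uₙ ≡_T ∏ₙ Uₙ`. -/
theorem stmt5 (U : ℕ → Ultrafilter ℕ) (hU : DiscreteSeq U) :
    TukeyEquiv (RevPoset {A : Set ℕ | ∀ n, A ∈ U n}) ((n : ℕ) → UltraPoset (U n)) := by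
  obtain ⟨D, hdisj, hD⟩ := hU
  constructor
  · -- f : A ↦ (n ↦ A)
    refine ⟨fun A n => ⟨A.val, A.prop n⟩, ?_⟩
    intro A hA
    rintro ⟨b, hb⟩
    apply hA
    refine ⟨⟨⋃ n, (OrderDual.ofDual (b n)).val ∩ D n, ?_⟩, ?_⟩
    · intro m
      exact Filter.mem_of_superset (Filter.inter_mem (b m).prop (hD m))
        (Set.subset_iUnion (fun n => (OrderDual.ofDual (b n)).val ∩ D n) m)
    · intro a ha
      have := hb _ ⟨a, ha, rfl⟩
      show (⋃ n, (OrderDual.ofDual (b n)).val ∩ D n) ⊆ a.val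
      intro x hx
      obtain ⟨_, ⟨n, rfl⟩, hxn⟩ := hx
      exact this n hxn.1
  · -- g : b ↦ ⋃ n, b n ∩ D n
    refine ⟨fun b => OrderDual.toDual ⟨⋃ n, (OrderDual.ofDual (b n)).val ∩ D n, ?_⟩, ?_⟩
    · intro m
      exact Filter.mem_of_superset (Filter.inter_mem (b m).prop (hD m))
        (Set.subset_iUnion (fun n => (OrderDual.ofDual (b n)).val ∩ D n) m)
    · intro A hA
      rintro ⟨c, hc⟩
      apply hA
      refine ⟨fun n => ⟨(OrderDual.ofDual c).val ∩ D n,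
        Filter.inter_mem ((OrderDual.ofDual c).prop n) (hD n)⟩, ?_⟩
      intro a ha n
      have hsub : (OrderDual.ofDual c).val ⊆ ⋃ m, (OrderDual.ofDual (a m)).val ∩ D m :=
        hc _ ⟨a, ha, rfl⟩
      show (OrderDual.ofDual c).val ∩ D n ⊆ (OrderDual.ofDual (a n)).val
      intro x hx
      obtain ⟨_, ⟨m, rfl⟩, hxm⟩ := hsub hx.1
      rcases eq_or_ne m n with rfl | hmn
      · exact hxm.1
      · exact absurd (Set.disjoint_left.mp (hdisj m n hmn) hxm.2 hx.2) (fun h => h)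
end

section
/- Let I be a deterministic ideal on a set S. Then I is simple: for every proper ideal J on S with I ⊆ J, one has (I, ⊆) ≤_T (J, ⊆). -/
open Set Filter

/-- An ideal: contains ∅, downward closed, closed under finite unions. -/
def IsIdeal {S : Type*} (I : Set (Set S)) : Prop :=
  ∅ ∈ I ∧ (∀ A ∈ I, ∀ B ⊆ A, B ∈ I) ∧ ∀ A ∈ I, ∀ B ∈ I, A ∪ B ∈ I

/-- A deterministic ideal: there is a cofinal `ℬ ⊆ I` such that any union of a subfamily of
`ℬ` is in `I` or has complement in `I`. -/
def Deterministic {S : Type*} (I : Set (Set S)) : Prop :=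
  ∃ B ⊆ I, (∀ A ∈ I, ∃ b ∈ B, A ⊆ b) ∧ ∀ 𝒜 ⊆ B, ⋃₀ 𝒜 ∈ I ∨ (⋃₀ 𝒜)ᶜ ∈ I

/-- A deterministic ideal is simple: it is Tukey below every proper ideal extending it. -/
theorem stmt6 {S : Type*} (I : Set (Set S)) (hI : IsIdeal I) (hdet : Deterministic I)
    (J : Set (Set S)) (hJ : IsIdeal J) (hJprop : (univ : Set S) ∉ J) (hIJ : I ⊆ J) :
    TukeyLE (InclPoset I) (InclPoset J) := by
  obtain ⟨B, hBI, hcof, hdet⟩ := hdet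
  choose b hbB hab using fun A : InclPoset I => hcof A.1 A.2
  refine ⟨fun A => ⟨b A, hIJ (hBI (hbB A))⟩, ?_⟩
  intro 𝒜 h𝒜 ⟨C, hC⟩
  have hsub : b '' 𝒜 ⊆ B := by rintro _ ⟨A, _, rfl⟩; exact hbB A
  rcases hdet _ hsub with h | h
  · exact h𝒜 ⟨⟨⋃₀ (b '' 𝒜), h⟩, fun A hA =>
      (hab A).trans (subset_sUnion_of_mem ⟨A, hA, rfl⟩)⟩
  · have hU : ⋃₀ (b '' 𝒜) ⊆ C.1 := by
      apply sUnion_subset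
      rintro _ ⟨A, hA, rfl⟩
      exact hC _ ⟨A, hA, rfl⟩
    have hUJ : ⋃₀ (b '' 𝒜) ∈ J := hJ.2.1 _ C.2 _ hU
    have : (univ : Set S) ∈ J := by
      have := hJ.2.2 _ hUJ _ (hIJ h)
      exact hJ.2.1 _ this _ (Set.union_compl_self _).symm.subset
    exact hJprop this
end

section
/- Let I be a deterministic ideal on a set X and let A ⊆ X. Then I ∩ 𝒫(A) = {b ∈ I : b ⊆ A} is a deterministic ideal on A; moreover, if A ∉ I, then (I, ⊆) ≡_T (I ∩ 𝒫(A), ⊆). -/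
open Set Filter

/-- An ideal on the ground set `S ⊆ X`. -/
def IsIdealOn {X : Type*} (S : Set X) (I : Set (Set X)) : Prop :=
  (∀ A ∈ I, A ⊆ S) ∧ ∅ ∈ I ∧ (∀ A ∈ I, ∀ B ⊆ A, B ∈ I) ∧ ∀ A ∈ I, ∀ B ∈ I, A ∪ B ∈ I

/-- Deterministic relative to the ground set `S`: complements are taken inside `S`. -/
def DeterministicOn {X : Type*} (S : Set X) (I : Set (Set X)) : Prop :=
  ∃ B ⊆ I, (∀ A ∈ I, ∃ b ∈ B, A ⊆ b) ∧ ∀ 𝒜 ⊆ B, ⋃₀ 𝒜 ∈ I ∨ (S \ ⋃₀ 𝒜) ∈ I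

/-- The restriction `I ∩ 𝒫(A)` of a deterministic ideal is a deterministic ideal on `A`;
moreover if `A ∉ I` then `I ≡_T I ∩ 𝒫(A)`. -/
theorem stmt8 {X : Type*} (I : Set (Set X)) (hI : IsIdeal I) (hdet : Deterministic I)
    (A : Set X) :
    IsIdealOn A {b | b ∈ I ∧ b ⊆ A} ∧ DeterministicOn A {b | b ∈ I ∧ b ⊆ A} ∧
      (A ∉ I → TukeyEquiv (InclPoset I) (InclPoset {b | b ∈ I ∧ b ⊆ A})) := by
  obtain ⟨h0, hdown, hunion⟩ := hI
  obtain ⟨B, hBI, hcof, hdetB⟩ := hdet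
  set J : Set (Set X) := {b | b ∈ I ∧ b ⊆ A} with hJ
  refine ⟨⟨fun b hb => hb.2, ⟨h0, empty_subset A⟩,
      fun a ha b hb => ⟨hdown a ha.1 b hb, hb.trans ha.2⟩,
      fun a ha b hb => ⟨hunion a ha.1 b hb.1, union_subset ha.2 hb.2⟩⟩, ?_, ?_⟩
  · -- DeterministicOn
    refine ⟨(· ∩ A) '' B, ?_, ?_, ?_⟩
    · rintro _ ⟨b, hb, rfl⟩
      exact ⟨hdown b (hBI hb) _ inter_subset_left, inter_subset_right⟩
    · rintro c ⟨hcI, hcA⟩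
      obtain ⟨b, hb, hcb⟩ := hcof c hcI
      exact ⟨b ∩ A, ⟨b, hb, rfl⟩, subset_inter hcb hcA⟩
    · intro 𝒜 h𝒜
      set 𝒜₀ : Set (Set X) := {b ∈ B | b ∩ A ∈ 𝒜} with h𝒜₀
      have key : ⋃₀ 𝒜 = ⋃₀ 𝒜₀ ∩ A := by
        apply subset_antisymm
        · rintro x ⟨a, ha, hxa⟩
          obtain ⟨b, hb, rfl⟩ := h𝒜 ha
          exact ⟨⟨b, ⟨hb, ha⟩, hxa.1⟩, hxa.2⟩
        · rintro x ⟨⟨b, hb, hxb⟩, hxA⟩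
          exact ⟨b ∩ A, hb.2, hxb, hxA⟩
      rcases hdetB 𝒜₀ (fun b hb => hb.1) with h | h
      · left
        exact ⟨hdown _ h _ (key ▸ inter_subset_left), key ▸ inter_subset_right⟩
      · right
        have hsub : A \ ⋃₀ 𝒜 ⊆ (⋃₀ 𝒜₀)ᶜ := by
          intro x hx hx0
          exact hx.2 (key ▸ ⟨hx0, hx.1⟩)
        exact ⟨hdown _ h _ hsub, diff_subset⟩
  · -- Tukey equivalence
    intro hA
    constructor
    · -- I ≤_T J
      have hc : ∀ b : InclPoset I, ∃ c, c ∈ B ∧ b.1 ⊆ c := fun b => hcof b.1 b.2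
      choose g hgB hgsub using hc
      refine ⟨fun b => ⟨g b ∩ A, hdown _ (hBI (hgB b)) _ inter_subset_left,
        inter_subset_right⟩, ?_⟩
      intro S hS
      intro ⟨c, hcbd⟩
      apply hS
      rcases hdetB (g '' S) (by rintro _ ⟨b, _, rfl⟩; exact hgB b) with h | h
      · exact ⟨⟨⋃₀ (g '' S), h⟩, fun b hb =>
          (hgsub b).trans (subset_sUnion_of_mem ⟨b, hb, rfl⟩)⟩
      · exfalso
        apply hA
        have : A ⊆ c.1 ∪ (⋃₀ (g '' S))ᶜ := by
          intro x hxA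
          by_cases hx : x ∈ ⋃₀ (g '' S)
          · obtain ⟨_, ⟨b, hb, rfl⟩, hxb⟩ := hx
            exact Or.inl (hcbd _ ⟨b, hb, rfl⟩ ⟨hxb, hxA⟩)
          · exact Or.inr hx
        exact hdown _ (hunion c.1 c.2.1 _ h) A this
    · -- J ≤_T I
      refine ⟨fun b => ⟨b.1, b.2.1⟩, ?_⟩
      intro S hS
      intro ⟨c, hcbd⟩
      apply hS
      refine ⟨⟨c.1 ∩ A, hdown c.1 c.2 _ inter_subset_left, inter_subset_right⟩,
        fun b hb => subset_inter (hcbd _ ⟨b, hb, rfl⟩) b.2.2⟩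
end

section
/- Let ⟨Iₙ : n∈ℕ⟩ be a sequence of deterministic ideals on ℕ, each containing every finite subset of ℕ, and let I be the ideal on ℕ generated by ⋃ₙ Iₙ, i.e., I consists of all subsets of ℕ contained in a finite union b₁ ∪ … ∪ b_k with each bᵢ ∈ ⋃ₙ Iₙ. Then I is deterministic. -/
open Set Filter

/-- The ideal generated by a countable family of deterministic ideals each containing all
finite sets, is deterministic. -/
theorem stmt9 (I : ℕ → Set (Set ℕ)) (hI : ∀ n, IsIdeal (I n))
    (hdet : ∀ n, Deterministic (I n)) (hfin : ∀ n, ∀ A : Set ℕ, A.Finite → A ∈ I n) :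
    Deterministic {A : Set ℕ | ∃ (k : ℕ) (b : Fin k → Set ℕ),
      (∀ i, ∃ n, b i ∈ I n) ∧ A ⊆ ⋃ i, b i} := by
  classical
  choose Bs hsub hcof hdic using hdet
  refine ⟨{X | ∃ (k N : ℕ) (b : Fin k → Set ℕ) (t : Fin k → ℕ),
      (∀ i, b i ∈ Bs (t i)) ∧ (∀ i, t i ≤ N) ∧ X = (⋃ i, b i) ∪ {j | j ≤ N}}, ?_, ?_, ?_⟩
  · -- 𝔅 ⊆ J
    rintro X ⟨k, N, b, t, hb, ht, rfl⟩
    refine ⟨k + 1, Fin.snoc b {j | j ≤ N}, ?_, ?_⟩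
    · intro i
      refine Fin.lastCases ?_ ?_ i
      · exact ⟨0, by rw [Fin.snoc_last]; exact hfin 0 _ (Set.finite_Iic N)⟩
      · intro j
        exact ⟨t j, by rw [Fin.snoc_castSucc]; exact hsub (t j) (hb j)⟩
    · intro x hx
      rcases hx with hx | hx
      · obtain ⟨j, hj⟩ := Set.mem_iUnion.mp hx
        exact Set.mem_iUnion.mpr ⟨j.castSucc, by rwa [Fin.snoc_castSucc]⟩
      · exact Set.mem_iUnion.mpr ⟨Fin.last k, by rwa [Fin.snoc_last]⟩
  · -- cofinality
    rintro A ⟨k, c, hc, hA⟩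
    choose m hm using hc
    choose e he hce using fun i => hcof (m i) (c i) (hm i)
    refine ⟨(⋃ i, e i) ∪ {j | j ≤ Finset.univ.sup m}, ⟨k, Finset.univ.sup m, e, m, he,
      fun i => Finset.le_sup (Finset.mem_univ i), rfl⟩, ?_⟩
    intro x hx
    obtain ⟨i, hi⟩ := Set.mem_iUnion.mp (hA hx)
    exact Or.inl (Set.mem_iUnion.mpr ⟨i, hce i hi⟩)
  · -- dichotomy
    intro 𝒜 h𝒜
    have hrep : ∀ X : 𝒜, ∃ (k N : ℕ) (b : Fin k → Set ℕ) (t : Fin k → ℕ),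
        (∀ i, b i ∈ Bs (t i)) ∧ (∀ i, t i ≤ N) ∧
        (X : Set ℕ) = (⋃ i, b i) ∪ {j | j ≤ N} := fun X => h𝒜 X.2
    choose k N b t hb ht hX using hrep
    by_cases hbd : ∃ M, ∀ X : 𝒜, N X ≤ M
    · obtain ⟨M, hM⟩ := hbd
      -- the family of level-j pieces
      set U : ℕ → Set (Set ℕ) :=
        fun j => {Y | ∃ (X : 𝒜) (i : Fin (k X)), t X i = j ∧ Y = b X i} with hU
      have hUsub : ∀ j, U j ⊆ Bs j := by
        rintro j Y ⟨X, i, hji, rfl⟩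
        rw [← hji]; exact hb X i
      have hUin : ∀ j, ⋃₀ U j ⊆ ⋃₀ 𝒜 := by
        rintro j x ⟨Y, ⟨X, i, hji, rfl⟩, hx⟩
        refine ⟨X, X.2, ?_⟩
        rw [hX X]
        exact Or.inl (Set.mem_iUnion.mpr ⟨i, hx⟩)
      by_cases hex : ∃ j, (⋃₀ U j)ᶜ ∈ I j
      · obtain ⟨j, hj⟩ := hex
        refine Or.inr ⟨1, fun _ => (⋃₀ U j)ᶜ, fun _ => ⟨j, hj⟩, ?_⟩
        intro x hx
        exact Set.mem_iUnion.mpr ⟨0, fun hmem => hx (hUin j hmem)⟩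
      · push_neg at hex
        have hall : ∀ j, ⋃₀ U j ∈ I j := fun j =>
          (hdic j (U j) (hUsub j)).resolve_right (hex j)
        refine Or.inl ⟨M + 2, Fin.snoc (fun j : Fin (M + 1) => ⋃₀ U (j : ℕ)) {j | j ≤ M},
          ?_, ?_⟩
        · intro i
          refine Fin.lastCases ?_ ?_ i
          · exact ⟨0, by rw [Fin.snoc_last]; exact hfin 0 _ (Set.finite_Iic M)⟩
          · intro j
            exact ⟨(j : ℕ), by rw [Fin.snoc_castSucc]; exact hall (j : ℕ)⟩
        · rintro x ⟨Y, hY, hx⟩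
          have hYe : Y = (⋃ i, b ⟨Y, hY⟩ i) ∪ {j | j ≤ N ⟨Y, hY⟩} := hX ⟨Y, hY⟩
          have hx' := hx
          rw [hYe] at hx'
          rcases hx' with hx' | hx'
          · obtain ⟨i, hi⟩ := Set.mem_iUnion.mp hx'
            have htle : t ⟨Y, hY⟩ i ≤ M := le_trans (ht ⟨Y, hY⟩ i) (hM ⟨Y, hY⟩)
            refine Set.mem_iUnion.mpr ⟨(⟨t ⟨Y, hY⟩ i, Nat.lt_succ_of_le htle⟩ :
              Fin (M + 1)).castSucc, ?_⟩
            rw [Fin.snoc_castSucc]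
            exact ⟨b ⟨Y, hY⟩ i, ⟨⟨Y, hY⟩, i, rfl, rfl⟩, hi⟩
          · refine Set.mem_iUnion.mpr ⟨Fin.last (M + 1), ?_⟩
            rw [Fin.snoc_last]
            exact le_trans hx' (hM ⟨Y, hY⟩)
    · push_neg at hbd
      refine Or.inr ⟨0, Fin.elim0, fun i => i.elim0, ?_⟩
      intro x hx
      exfalso
      obtain ⟨X, hXx⟩ := hbd x
      refine hx ⟨X, X.2, ?_⟩
      have hXe : (X : Set ℕ) = (⋃ i, b X i) ∪ {j | j ≤ N X} := hX X
      rw [hXe]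
      exact Or.inr (le_of_lt hXx)
end

section
/- Let I be a simple ideal on ℕ and U a nonprincipal ultrafilter on ℕ such that I ⊆ U* (ℕ∖t ∈ U for every t ∈ I) and U has the I-p.i.p. Then U·U ≡_T (U, ⊇) × (I, ⊆)^ω. Consequently, U·U ≡_T U if and only if (I, ⊆)^ω ≤_T (U, ⊇). -/
open Set Filter

/-- A simple ideal: Tukey below every proper ideal extending it. -/
def SimpleIdeal (I : Set (Set ℕ)) : Prop :=
  ∀ J : Set (Set ℕ), IsIdeal J → (univ : Set ℕ) ∉ J → I ⊆ J →
    TukeyLE (InclPoset I) (InclPoset J)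

/-- `F` has the `I`-pseudo-intersection property (for an ideal `I`). -/
def HasIdealPIP (F : Filter ℕ) (I : Set (Set ℕ)) : Prop :=
  ∀ X : ℕ → Set ℕ, (∀ n, X n ∈ F) → ∃ Y ∈ F, ∀ n, Y \ X n ∈ I

section helpers
variable {α β γ : Type*} [Preorder α] [Preorder β] [Preorder γ]

lemma isUnboundedMap_of {f : α → β}
    (h : ∀ A : Set α, (∃ b, ∀ a ∈ A, f a ≤ b) → ∃ c, ∀ a ∈ A, a ≤ c) :
    IsUnboundedMap f := by
  intro A hA hb
  apply hA
  apply h A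
  obtain ⟨b, hb⟩ := hb
  exact ⟨b, fun a ha => hb _ (Set.mem_image_of_mem f ha)⟩

lemma tukeyLE_trans : TukeyLE α β → TukeyLE β γ → TukeyLE α γ := by
  rintro ⟨f, hf⟩ ⟨g, hg⟩
  refine ⟨g ∘ f, fun A hA => ?_⟩
  rw [Set.image_comp]
  exact hg _ (hf _ hA)

end helpers

variable (U : Ultrafilter ℕ)

/-- U·U ≤_T U × U^ω -/
lemma fubini_le_prod :
    TukeyLE (RevPoset (fubiniSets U U)) (UltraPoset U × (ℕ → UltraPoset U)) := by
  classical
  refine ⟨fun A => (OrderDual.toDual ⟨{n | {m | (n, m) ∈ (OrderDual.ofDual A).1} ∈ U},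
      (OrderDual.ofDual A).2⟩,
    fun n => OrderDual.toDual ⟨if h : {m | (n, m) ∈ (OrderDual.ofDual A).1} ∈ U
      then {m | (n, m) ∈ (OrderDual.ofDual A).1} else univ,
      by split
         · assumption
         · exact univ_mem⟩), isUnboundedMap_of ?_⟩
  rintro 𝒜 ⟨⟨b₁, b₂⟩, hb⟩
  set B : Set ℕ := (OrderDual.ofDual b₁).1 with hB
  refine ⟨OrderDual.toDual ⟨{p : ℕ × ℕ | p.1 ∈ B ∧ p.2 ∈ (OrderDual.ofDual (b₂ p.1)).1}, ?_⟩,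
    ?_⟩
  · -- membership in fubiniSets
    refine mem_of_superset (OrderDual.ofDual b₁).2 ?_
    intro n hn
    show {m | n ∈ B ∧ m ∈ (OrderDual.ofDual (b₂ n)).1} ∈ U
    refine mem_of_superset (OrderDual.ofDual (b₂ n)).2 ?_
    intro m hm
    exact ⟨hn, hm⟩
  · intro A hA
    obtain ⟨h1, h2⟩ := hb A hA
    intro p hp
    obtain ⟨hp1, hp2⟩ := hp
    have hAU : {m | (p.1, m) ∈ (OrderDual.ofDual A).1} ∈ U := h1 hp1
    have hsub : (OrderDual.ofDual (b₂ p.1)).1 ⊆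
        (if h : {m | (p.1, m) ∈ (OrderDual.ofDual A).1} ∈ U
          then {m | (p.1, m) ∈ (OrderDual.ofDual A).1} else univ) := h2 p.1
    rw [dif_pos hAU] at hsub
    exact hsub hp2

lemma ultrafilter_infinite_of_mem {U : Ultrafilter ℕ} (hU : Nonprincipal U)
    {B : Set ℕ} (hB : B ∈ U) : ∀ n : ℕ, ∃ k ∈ B, n ≤ k := by
  intro n
  by_contra h
  push_neg at h
  have hfin : B.Finite := (Set.finite_Iio n).subset (fun k hk => h k hk)
  obtain ⟨a, -, ha⟩ := Ultrafilter.eq_pure_of_finite_mem hfin hB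
  exact hU a (by rw [ha]; exact rfl)

/-- U × U^ω ≤_T U·U -/
lemma prod_le_fubini (hU : Nonprincipal U) :
    TukeyLE (UltraPoset U × (ℕ → UltraPoset U)) (RevPoset (fubiniSets U U)) := by
  classical
  refine ⟨fun p => OrderDual.toDual ⟨{q : ℕ × ℕ | q.1 ∈ (OrderDual.ofDual p.1).1 ∧
      ∀ k ≤ q.1, q.2 ∈ (OrderDual.ofDual (p.2 k)).1}, ?_⟩, isUnboundedMap_of ?_⟩
  · refine mem_of_superset (OrderDual.ofDual p.1).2 ?_
    intro n hn
    show {m | n ∈ _ ∧ ∀ k ≤ n, m ∈ _} ∈ U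
    have : (⋂ k ∈ Finset.Iic n, (OrderDual.ofDual (p.2 k)).1) ∈ U := by
      rw [Ultrafilter.mem_coe.symm]
      exact (Filter.biInter_finset_mem _).mpr fun k _ => (OrderDual.ofDual (p.2 k)).2
    refine mem_of_superset this ?_
    intro m hm
    simp only [Set.mem_iInter] at hm
    exact ⟨hn, fun k hk => hm k (Finset.mem_Iic.mpr hk)⟩
  · rintro 𝒮 ⟨c, hc⟩
    set D : Set (ℕ × ℕ) := (OrderDual.ofDual c).1 with hD
    have hDfub : D ∈ fubiniSets U U := (OrderDual.ofDual c).2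
    set B₀ : Set ℕ := {n | {m | (n, m) ∈ D} ∈ U} with hB₀
    have hB₀U : B₀ ∈ U := hDfub
    choose g hg1 hg2 using ultrafilter_infinite_of_mem hU hB₀U
    refine ⟨(OrderDual.toDual ⟨B₀, hB₀U⟩,
      fun n => OrderDual.toDual ⟨{m | (g n, m) ∈ D}, hg1 n⟩), ?_⟩
    rintro ⟨B, C⟩ hS
    have hDsub : D ⊆ {q : ℕ × ℕ | q.1 ∈ (OrderDual.ofDual B).1 ∧
        ∀ k ≤ q.1, q.2 ∈ (OrderDual.ofDual (C k)).1} := hc _ hS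
    constructor
    · -- B₀ ⊆ B
      intro n hn
      have hne : {m | (n, m) ∈ D}.Nonempty :=
        Filter.nonempty_of_mem (Ultrafilter.mem_coe.mpr hn)
      obtain ⟨m, hm⟩ := hne
      exact (hDsub hm).1
    · -- coordinates
      intro n
      intro m hm
      exact (hDsub hm).2 n (hg2 n)

variable (I : Set (Set ℕ))

/-- U × U^ω ≤_T U × I^ω, from the I-p.i.p. -/
lemma prodU_le_prodI (hIU : ∀ t ∈ I, tᶜ ∈ U) (hpip : HasIdealPIP U I) :
    TukeyLE (UltraPoset U × (ℕ → UltraPoset U)) (UltraPoset U × (ℕ → InclPoset I)) := by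
  classical
  choose Y hYU hYI using hpip
  refine ⟨fun p => (OrderDual.toDual ⟨(OrderDual.ofDual p.1).1 ∩
      Y (fun n => (OrderDual.ofDual (p.2 n)).1) (fun n => (OrderDual.ofDual (p.2 n)).2),
      inter_mem (OrderDual.ofDual p.1).2
        (hYU (fun n => (OrderDual.ofDual (p.2 n)).1) (fun n => (OrderDual.ofDual (p.2 n)).2))⟩,
    fun n => ⟨Y (fun n => (OrderDual.ofDual (p.2 n)).1) (fun n => (OrderDual.ofDual (p.2 n)).2)
        \ (OrderDual.ofDual (p.2 n)).1,
      hYI (fun n => (OrderDual.ofDual (p.2 n)).1) (fun n => (OrderDual.ofDual (p.2 n)).2) n⟩),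
    isUnboundedMap_of ?_⟩
  rintro 𝒮 ⟨⟨c, t⟩, hc⟩
  refine ⟨(c, fun n => OrderDual.toDual ⟨(OrderDual.ofDual c).1 ∩ ((t n).1)ᶜ,
    inter_mem (OrderDual.ofDual c).2 (hIU _ (t n).2)⟩), ?_⟩
  rintro ⟨B, C⟩ hS
  obtain ⟨h1, h2⟩ := hc _ hS
  set X : ℕ → Set ℕ := fun n => (OrderDual.ofDual (C n)).1 with hX
  set hXU : ∀ n, X n ∈ U := fun n => (OrderDual.ofDual (C n)).2 with hXU'
  have hcsub : (OrderDual.ofDual c).1 ⊆ (OrderDual.ofDual B).1 ∩ Y X hXU := h1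
  constructor
  · exact fun n hn => (hcsub hn).1
  · intro n m hm
    obtain ⟨hm1, hm2⟩ := hm
    have hmY : m ∈ Y X hXU := (hcsub hm1).2
    have ht : Y X hXU \ X n ⊆ (t n).1 := h2 n
    show m ∈ X n
    by_contra hmX
    exact hm2 (ht ⟨hmY, hmX⟩)

/-- U × I^ω ≤_T U × U^ω, from simplicity of I. -/
lemma prodI_le_prodU (hsimple : SimpleIdeal I) (hIU : ∀ t ∈ I, tᶜ ∈ U) :
    TukeyLE (UltraPoset U × (ℕ → InclPoset I)) (UltraPoset U × (ℕ → UltraPoset U)) := by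
  classical
  -- the dual ideal J = U*
  set J : Set (Set ℕ) := {A | Aᶜ ∈ U} with hJ
  have hJideal : IsIdeal J := by
    refine ⟨?_, fun A hA B hB => ?_, fun A hA B hB => ?_⟩
    · show (∅ : Set ℕ)ᶜ ∈ U
      rw [compl_empty]; exact univ_mem
    · exact mem_of_superset hA (compl_subset_compl.mpr hB)
    · show (A ∪ B)ᶜ ∈ U
      rw [compl_union]; exact inter_mem hA hB
  have hJuniv : (univ : Set ℕ) ∉ J := by
    simp only [hJ, mem_setOf_eq, compl_univ]
    exact U.empty_notMem
  have hIJ : I ⊆ J := fun t ht => hIU t ht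
  obtain ⟨v, hv⟩ := hsimple J hJideal hJuniv hIJ
  -- compose with complement map J → U
  have hwu : ∃ u : InclPoset I → UltraPoset U, IsUnboundedMap u := by
    refine ⟨fun s => OrderDual.toDual ⟨((v s).1)ᶜ, (v s).2⟩, isUnboundedMap_of ?_⟩
    rintro S ⟨c, hc⟩
    have hvb : ∀ s ∈ S, v s ≤ ⟨((OrderDual.ofDual c).1)ᶜ, by
        show ((OrderDual.ofDual c).1)ᶜᶜ ∈ U
        rw [compl_compl]; exact (OrderDual.ofDual c).2⟩ := by
      intro s hs
      have := hc s hs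
      have hsub : (OrderDual.ofDual c).1 ⊆ ((v s).1)ᶜ := this
      exact Set.subset_compl_comm.mp hsub
    -- v '' S is bounded in J, so S is bounded
    by_contra hSub
    push_neg at hSub
    have hSunb : IsUnboundedSet S := by
      intro ⟨b, hb⟩
      obtain ⟨s, hs, hbs⟩ := hSub b
      exact hbs (hb s hs)
    exact hv S hSunb ⟨_, fun y ⟨s, hs, hys⟩ => hys ▸ hvb s hs⟩
  obtain ⟨u, hu⟩ := hwu
  refine ⟨fun p => (p.1, fun n => u (p.2 n)), isUnboundedMap_of ?_⟩
  rintro 𝒮 ⟨⟨c, t⟩, hc⟩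
  -- each coordinate's u-image is bounded, so the coordinate sets are bounded
  have hcoord : ∀ n, ∃ e : InclPoset I, ∀ p ∈ 𝒮, p.2 n ≤ e := by
    intro n
    by_contra h
    push_neg at h
    have hSn : IsUnboundedSet {s : InclPoset I | ∃ p ∈ 𝒮, p.2 n = s} := by
      rintro ⟨b, hb⟩
      obtain ⟨p, hp, hbp⟩ := h b
      exact hbp (hb _ ⟨p, hp, rfl⟩)
    refine hu _ hSn ⟨t n, ?_⟩
    rintro y ⟨s, ⟨p, hp, hps⟩, hys⟩
    rw [← hys, ← hps]
    exact (hc p hp).2 n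
  choose e he using hcoord
  exact ⟨(c, e), fun p hp => ⟨(hc p hp).1, fun n => he n p hp⟩⟩

/-- I^ω ≤_T U × I^ω -/
lemma Iomega_le_prod :
    TukeyLE (ℕ → InclPoset I) (UltraPoset U × (ℕ → InclPoset I)) := by
  refine ⟨fun s => (OrderDual.toDual ⟨univ, univ_mem⟩, s), isUnboundedMap_of ?_⟩
  rintro S ⟨⟨c, t⟩, hc⟩
  exact ⟨t, fun s hs => (hc s hs).2⟩

/-- If I^ω ≤_T U then U × I^ω ≤_T U. -/
lemma prod_le_U (h : TukeyLE (ℕ → InclPoset I) (UltraPoset U)) :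
    TukeyLE (UltraPoset U × (ℕ → InclPoset I)) (UltraPoset U) := by
  obtain ⟨u, hu⟩ := h
  refine ⟨fun p => OrderDual.toDual ⟨(OrderDual.ofDual p.1).1 ∩ (OrderDual.ofDual (u p.2)).1,
    inter_mem (OrderDual.ofDual p.1).2 (OrderDual.ofDual (u p.2)).2⟩, isUnboundedMap_of ?_⟩
  rintro 𝒮 ⟨c, hc⟩
  have hsec : ∃ e : ℕ → InclPoset I, ∀ p ∈ 𝒮, p.2 ≤ e := by
    by_contra h
    push_neg at h
    have hSunb : IsUnboundedSet {s : ℕ → InclPoset I | ∃ p ∈ 𝒮, p.2 = s} := by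
      rintro ⟨b, hb⟩
      obtain ⟨p, hp, hbp⟩ := h b
      exact hbp (hb _ ⟨p, hp, rfl⟩)
    refine hu _ hSunb ⟨c, ?_⟩
    rintro y ⟨s, ⟨p, hp, hps⟩, hys⟩
    rw [← hys, ← hps]
    intro m hm
    exact (hc p hp hm).2
  obtain ⟨e, he⟩ := hsec
  refine ⟨(c, e), fun p hp => ⟨fun m hm => (hc p hp hm).1, he p hp⟩⟩

/-- U ≤_T U·U -/
lemma U_le_fubini : TukeyLE (UltraPoset U) (RevPoset (fubiniSets U U)) := by
  refine ⟨fun B => OrderDual.toDual ⟨{q : ℕ × ℕ | q.1 ∈ (OrderDual.ofDual B).1}, ?_⟩,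
    isUnboundedMap_of ?_⟩
  · refine mem_of_superset (OrderDual.ofDual B).2 ?_
    intro n hn
    exact mem_of_superset univ_mem fun m _ => hn
  · rintro 𝒮 ⟨c, hc⟩
    set D : Set (ℕ × ℕ) := (OrderDual.ofDual c).1 with hD
    have hDfub : D ∈ fubiniSets U U := (OrderDual.ofDual c).2
    refine ⟨OrderDual.toDual ⟨{n | {m | (n, m) ∈ D} ∈ U}, hDfub⟩, ?_⟩
    intro B hB n hn
    obtain ⟨m, hm⟩ : {m | (n, m) ∈ D}.Nonempty :=
      Filter.nonempty_of_mem (Ultrafilter.mem_coe.mpr hn)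
    exact hc B hB hm

/-- For a simple ideal `I ⊆ U*` with `U` having the `I`-p.i.p.:
`U·U ≡_T U × I^ω`; consequently `U·U ≡_T U ↔ I^ω ≤_T U`. -/
theorem stmt13 (I : Set (Set ℕ)) (hI : IsIdeal I) (hsimple : SimpleIdeal I)
    (U : Ultrafilter ℕ) (hU : Nonprincipal U) (hIU : ∀ t ∈ I, tᶜ ∈ U)
    (hpip : HasIdealPIP U I) :
    TukeyEquiv (RevPoset (fubiniSets U U)) (UltraPoset U × (ℕ → InclPoset I)) ∧
      (TukeyEquiv (RevPoset (fubiniSets U U)) (UltraPoset U) ↔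
        TukeyLE (ℕ → InclPoset I) (UltraPoset U)) := by
  have E1 := tukeyLE_trans (fubini_le_prod U) (prodU_le_prodI U I hIU hpip)
  have E2 := tukeyLE_trans (prodI_le_prodU U I hsimple hIU) (prod_le_fubini U hU)
  refine ⟨⟨E1, E2⟩, ?_, ?_⟩
  · rintro ⟨h1, -⟩
    exact tukeyLE_trans (tukeyLE_trans (Iomega_le_prod U I) E2) h1
  · intro h
    exact ⟨tukeyLE_trans E1 (prod_le_U U I h), U_le_fubini U⟩
end

section
/- Let U be an ultrafilter on ℕ and I a deterministic ideal on ℕ such that I contains every finite subset of ℕ and I ⊆ U* (ℕ∖t ∈ U for every t ∈ I). If (I, ⊆)^ω ≰_T (U, ⊇), then U has the I-p.i.p. -/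
open Set Filter

/-- For a deterministic ideal `fin ⊆ I ⊆ U*`: if `I^ω ≰_T U` then `U` has the `I`-p.i.p. -/
theorem stmt14 (U : Ultrafilter ℕ) (I : Set (Set ℕ)) (hI : IsIdeal I)
    (hdet : Deterministic I) (hfin : ∀ A : Set ℕ, A.Finite → A ∈ I)
    (hIU : ∀ t ∈ I, tᶜ ∈ U)
    (h : ¬ TukeyLE (ℕ → InclPoset I) (UltraPoset U)) :
    HasIdealPIP U I := by
  intro X hX
  by_contra hcon
  push_neg at hcon
  apply h
  obtain ⟨B, hBI, hcof, hdich⟩ := hdet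
  choose bb hbbB hbbsub using hcof
  set X' : ℕ → Set ℕ := fun n => ⋂ j ∈ Set.Iic n, X j with hX'def
  have hX'U : ∀ n, X' n ∈ U := fun n =>
    (Filter.biInter_mem (Set.finite_Iic n)).2 fun j _ => hX j
  have hX'mono : ∀ {m n : ℕ}, m ≤ n → X' n ⊆ X' m := by
    intro m n hmn k hk
    rw [Set.mem_iInter₂] at hk ⊢
    intro j hj
    exact hk j (le_trans hj hmn)
  have hfail : ∀ Y : Set ℕ, Y ∈ U → ∃ n, Y \ X' n ∉ I := by
    intro Y hY
    obtain ⟨n, hn⟩ := hcon Y hY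
    refine ⟨n, fun hmem => hn (hI.2.1 _ hmem _ ?_)⟩
    refine Set.diff_subset_diff_right ?_
    intro k hk
    exact (Set.mem_iInter₂.1 hk) n (Set.mem_Iic.2 le_rfl)
  have hfu : ∀ (c : ℕ → Set ℕ), (∀ j, c j ∈ I) → ∀ n, (⋃ j ∈ Finset.range n, c j) ∈ I := by
    intro c hc n
    induction n with
    | zero => simpa using hI.1
    | succ k ih =>
        rw [Finset.range_add_one]
        rw [Finset.set_biUnion_insert]
        exact hI.2.2 _ (hc k) _ ih
  set g : (ℕ → InclPoset I) → Set ℕ :=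
    fun t => (⋃ n, bb (t n).1 (t n).2 ∩ X' n)ᶜ with hgdef
  have hgU : ∀ t, g t ∈ U := by
    intro t
    by_contra hg
    have hYm : (⋃ n, bb (t n).1 (t n).2 ∩ X' n) ∈ U := by
      have := (Ultrafilter.compl_mem_iff_notMem).2 hg
      simpa [hgdef, compl_compl] using this
    obtain ⟨n, hn⟩ := hfail _ hYm
    apply hn
    apply hI.2.1 _ (hfu (fun j => bb (t j).1 (t j).2) (fun j => hBI (hbbB _ _)) n)
    rintro k ⟨hk1, hk2⟩
    simp only [Set.mem_iUnion] at hk1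
    obtain ⟨j, hkj, hkX⟩ := hk1
    have hjn : j < n := by
      by_contra hjn
      exact hk2 (hX'mono (le_of_not_gt hjn) hkX)
    exact Set.mem_biUnion (Finset.mem_range.2 hjn) hkj
  refine ⟨fun t => OrderDual.toDual ⟨g t, hgU t⟩, ?_⟩
  intro A hA hbdd
  obtain ⟨Yd, hYd⟩ := hbdd
  set Y : Set ℕ := (OrderDual.ofDual Yd).1 with hYdef
  have hYU : Y ∈ U := (OrderDual.ofDual Yd).2
  have hYsub : ∀ t ∈ A, Y ⊆ g t := by
    intro t ht
    exact hYd _ (Set.mem_image_of_mem _ ht)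
  apply hA
  have hW : ∀ n, ⋃₀ {s | s ∈ B ∧ s ∩ (X' n ∩ Y) = ∅} ∈ I := by
    intro n
    rcases hdich {s | s ∈ B ∧ s ∩ (X' n ∩ Y) = ∅} (fun s (hs : s ∈ B ∧ s ∩ (X' n ∩ Y) = ∅) => hs.1) with h1 | h2
    · exact h1
    · exfalso
      have hsubc : X' n ∩ Y ⊆ (⋃₀ {s | s ∈ B ∧ s ∩ (X' n ∩ Y) = ∅})ᶜ := by
        intro k hk hkU
        obtain ⟨s, ⟨hsB, hsE⟩, hks⟩ := hkU
        have hmem : k ∈ s ∩ (X' n ∩ Y) := ⟨hks, hk⟩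
        rw [hsE] at hmem
        exact hmem
      have hXY : X' n ∩ Y ∈ I := hI.2.1 _ h2 _ hsubc
      have hc1 : (X' n ∩ Y)ᶜ ∈ U := hIU _ hXY
      have hc2 : X' n ∩ Y ∈ U := Filter.inter_mem (hX'U n) hYU
      have hemp : (∅ : Set ℕ) ∈ U := by
        have := Filter.inter_mem hc2 hc1
        simp only [Set.inter_compl_self] at this
        exact this
      exact (Filter.empty_notMem (U : Filter ℕ)) hemp
  refine ⟨fun n => ⟨_, hW n⟩, ?_⟩
  intro t ht n
  show ((t n : Set ℕ)) ⊆ _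
  intro k hk
  refine ⟨bb (t n).1 (t n).2, ⟨hbbB _ _, ?_⟩, hbbsub _ _ hk⟩
  rw [Set.eq_empty_iff_forall_notMem]
  rintro m ⟨hm1, hm2, hm3⟩
  have : m ∈ g t := hYsub t ht hm3
  exact this (Set.mem_iUnion.2 ⟨n, hm1, hm2⟩)
end

section
/- Let U be a nonprincipal ultrafilter on ℕ. If ℕ^ℕ, ordered by everywhere domination (f ≤ g iff f(n) ≤ g(n) for all n), is not Tukey below (U, ⊇), then U is a p-point. -/
open Set Filter

/-- A p-point: every countable family of members of `U` has a pseudo-intersection in `U`. -/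
def IsPPoint (U : Ultrafilter ℕ) : Prop :=
  ∀ X : ℕ → Set ℕ, (∀ n, X n ∈ U) → ∃ Y ∈ U, ∀ n, (Y \ X n).Finite

/-- A nonprincipal ultrafilter not Tukey above `ℕ^ℕ` is a p-point. -/
theorem stmt15 (U : Ultrafilter ℕ) (hU : Nonprincipal U)
    (h : ¬ TukeyLE (ℕ → ℕ) (UltraPoset U)) : IsPPoint U := by
  classical
  intro X hX
  by_contra hno
  push_neg at hno
  exfalso
  apply h
  -- hno : ∀ Y ∈ U, ∃ n, ¬ (Y \ X n).Finite
  set T : Set ℕ := ⋂ n, X n with hTdef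
  have hT : T ∉ U := by
    intro hTU
    obtain ⟨n, hn⟩ := hno T hTU
    apply hn
    have : T \ X n = ∅ := by
      apply Set.diff_eq_empty.mpr
      exact Set.iInter_subset _ n
    rw [this]; exact Set.finite_empty
  set Z : ℕ → Set ℕ := fun n => {m | (∀ k ≤ n, m ∈ X k) ∧ m ∉ T} with hZdef
  have hZmem : ∀ n, Z n ∈ U := by
    intro n
    have h1 : {m : ℕ | ∀ k ≤ n, m ∈ X k} ∈ U := by
      have : (⋂ k ∈ Set.Iic n, X k) ∈ U :=
        (Filter.biInter_mem (Set.finite_Iic n)).mpr (fun k _ => hX k)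
      have heq : (⋂ k ∈ Set.Iic n, X k) = {m : ℕ | ∀ k ≤ n, m ∈ X k} := by
        ext m; simp [Set.mem_iInter, Set.mem_Iic]
      rwa [heq] at this
    have h2 : Tᶜ ∈ U := Ultrafilter.compl_mem_iff_notMem.mpr hT
    have : {m : ℕ | ∀ k ≤ n, m ∈ X k} ∩ Tᶜ ∈ U := Filter.inter_mem h1 h2
    exact this
  have hZex : ∀ m : ℕ, ∃ n, m ∉ Z n := by
    intro m
    by_cases hmT : m ∈ T
    · exact ⟨0, fun hc => hc.2 hmT⟩
    · obtain ⟨k, hk⟩ : ∃ k, m ∉ X k := by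
        by_contra hc; push_neg at hc
        exact hmT (Set.mem_iInter.mpr hc)
      exact ⟨k, fun hc => hk (hc.1 k le_rfl)⟩
  set r : ℕ → ℕ := fun m => Nat.find (hZex m) with hrdef
  have hZanti : ∀ {a b : ℕ}, a ≤ b → Z b ⊆ Z a := by
    intro a b hab m hm
    exact ⟨fun k hk => hm.1 k (hk.trans hab), hm.2⟩
  have hr : ∀ m n, m ∉ Z n ↔ r m ≤ n := by
    intro m n
    constructor
    · intro hmn; exact Nat.find_min' (hZex m) hmn
    · intro hle hmn
      exact Nat.find_spec (hZex m) (hZanti hle hmn)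
  set fset : (ℕ → ℕ) → Set ℕ := fun g => {m | ∃ i ≤ r m, m < g i}ᶜ with hfdef
  have hfmem : ∀ g, fset g ∈ U := by
    intro g
    apply Ultrafilter.compl_mem_iff_notMem.mpr
    intro hC
    obtain ⟨n, hn⟩ := hno _ hC
    apply hn
    apply Set.Finite.subset (Set.finite_Iio ((Finset.range (n + 1)).sup g))
    rintro m ⟨hmC, hmX⟩
    have hmZ : m ∉ Z n := fun hc => hmX (hc.1 n le_rfl)
    have hrm : r m ≤ n := (hr m n).mp hmZ
    obtain ⟨i, hi, hgi⟩ := hmC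
    have : g i ≤ (Finset.range (n + 1)).sup g :=
      Finset.le_sup (Finset.mem_range.mpr (Nat.lt_succ_of_le (hi.trans hrm)))
    exact Set.mem_Iio.mpr (lt_of_lt_of_le hgi this)
  refine ⟨fun g => OrderDual.toDual ⟨fset g, hfmem g⟩, ?_⟩
  intro A hA hbdd
  apply hA
  obtain ⟨b, hb⟩ := hbdd
  set S : Set ℕ := (OrderDual.ofDual b).1 with hSdef
  have hSU : S ∈ U := (OrderDual.ofDual b).2
  have hne : ∀ k, (S ∩ Z k).Nonempty :=
    fun k => Filter.nonempty_of_mem (Filter.inter_mem hSU (hZmem k))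
  choose bd hbd using hne
  refine ⟨bd, fun g hg k => ?_⟩
  have hle : (OrderDual.ofDual b : {A : Set ℕ // A ∈ {A : Set ℕ | A ∈ U}}) ≤
      ⟨fset g, hfmem g⟩ := hb _ ⟨g, hg, rfl⟩
  have hsub : S ⊆ fset g := hle
  have hm := hbd k
  have hmf : bd k ∈ fset g := hsub hm.1
  have hkr : k ≤ r (bd k) := by
    by_contra hc
    push_neg at hc
    exact ((hr (bd k) k).mpr hc.le) hm.2
  by_contra hgk
  push_neg at hgk
  exact hmf ⟨k, hkr, hgk⟩
end

section
/- For every k ∈ ℕ, if U is a k-almost-rapid nonprincipal ultrafilter on ℕ, then ℕ^ℕ, ordered by everywhere domination, is Tukey below (U, ⊇). -/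
open Set Filter

/-- `expOnce g` is the function `exp(g)`: `exp(g)(0) = g 0`, `exp(g)(n+1) = g (exp(g)(n))`. -/
def expOnce (g : ℕ → ℕ) : ℕ → ℕ
  | 0 => g 0
  | n + 1 => g (expOnce g n)

/-- `expIter k g = exp_k(g)`. -/
def expIter : ℕ → (ℕ → ℕ) → ℕ → ℕ
  | 0, g => g
  | k + 1, g => expOnce (expIter k g)

/-- The increasing enumeration of a (infinite) subset of ℕ. -/
noncomputable def enum (X : Set ℕ) : ℕ → ℕ := Nat.nth (· ∈ X)

/-- A `k`-almost-rapid ultrafilter. -/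
def AlmostRapidK (k : ℕ) (U : Ultrafilter ℕ) : Prop :=
  ∀ g : ℕ → ℕ, ∃ X ∈ U, ∀ᶠ n in atTop, g n ≤ expIter k (enum X) n
section Aux

private lemma expOnce_le {f f' : ℕ → ℕ} (h : ∀ m, f m ≤ f' m) (hm : Monotone f') :
    ∀ n, expOnce f n ≤ expOnce f' n := by
  intro n
  induction n with
  | zero => exact h 0
  | succ n ih => exact le_trans (h _) (hm ih)

private lemma expOnce_succ_le {f : ℕ → ℕ} (h : ∀ m, m + 1 ≤ f m) :
    ∀ m, m + 1 ≤ expOnce f m := by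
  intro m
  induction m with
  | zero => exact h 0
  | succ n ih => exact le_trans (Nat.succ_le_succ ih) (h _)

private lemma expOnce_mono {f : ℕ → ℕ} (h : ∀ m, m + 1 ≤ f m) :
    Monotone (expOnce f) := by
  apply monotone_nat_of_le_succ
  intro n
  show expOnce f n ≤ f (expOnce f n)
  exact le_trans (Nat.le_succ _) (h _)

private lemma expIter_le (k : ℕ) {f f' : ℕ → ℕ} (h : ∀ m, f m ≤ f' m)
    (hm : Monotone f') (hs : ∀ m, m + 1 ≤ f' m) :
    (∀ n, expIter k f n ≤ expIter k f' n) ∧ Monotone (expIter k f') ∧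
      (∀ m, m + 1 ≤ expIter k f' m) := by
  induction k with
  | zero => exact ⟨h, hm, hs⟩
  | succ k ih =>
    obtain ⟨h1, h2, h3⟩ := ih
    exact ⟨expOnce_le h1 h2, expOnce_mono h3, expOnce_succ_le h3⟩

private lemma mem_infinite_of_nonprincipal {U : Ultrafilter ℕ} (hU : Nonprincipal U)
    {C : Set ℕ} (hC : C ∈ U) : C.Infinite := by
  by_contra hcon
  rw [Set.not_infinite] at hcon
  have hfin := hcon
  obtain ⟨x, -, hx⟩ := Ultrafilter.eq_pure_of_finite_mem hfin hC
  exact hU x (by rw [hx]; exact rfl)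

private lemma Ici_mem_of_nonprincipal {U : Ultrafilter ℕ} (hU : Nonprincipal U) (M : ℕ) :
    Set.Ici M ∈ U := by
  have : (Set.Iio M)ᶜ ∈ U := by
    rw [Ultrafilter.compl_mem_iff_notMem]
    intro hmem
    obtain ⟨x, -, hx⟩ := Ultrafilter.eq_pure_of_finite_mem (Set.finite_Iio M) hmem
    exact hU x (by rw [hx]; exact rfl)
  rwa [Set.compl_Iio] at this

private lemma nth_le_nth_of_subset {C Y : Set ℕ} (hC : C.Infinite) (hsub : C ⊆ Y) :
    ∀ n, Nat.nth (· ∈ Y) n ≤ Nat.nth (· ∈ C) n := by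
  classical
  intro n
  have hY : (setOf (· ∈ Y)).Infinite := (hC.mono hsub)
  set m := Nat.nth (· ∈ C) n with hm
  have hmC : m ∈ C := Nat.nth_mem_of_infinite hC n
  have hcount : Nat.count (· ∈ C) m = n :=
    Nat.count_nth (fun hf => absurd hf hC)
  have hle : Nat.count (· ∈ C) m ≤ Nat.count (· ∈ Y) m := by
    rw [Nat.count_eq_card_filter_range, Nat.count_eq_card_filter_range]
    exact Finset.card_le_card (Finset.monotone_filter_right _ (fun x _ hx => hsub hx))
  rcases lt_or_eq_of_le (hcount ▸ hle) with hlt | heq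
  · exact le_of_lt ((Nat.lt_nth_iff_count_lt hY).mp hlt)
  · rw [heq]
    exact le_of_eq (Nat.nth_count (hsub hmC))

private lemma succ_le_of_strictMono {f : ℕ → ℕ} (hf : StrictMono f) (h0 : 1 ≤ f 0) :
    ∀ m, m + 1 ≤ f m := by
  intro m
  induction m with
  | zero => exact h0
  | succ n ih => exact Nat.succ_le_of_lt (lt_of_le_of_lt ih (hf (Nat.lt_succ_self n)))

end Aux

/-- A `k`-almost-rapid nonprincipal ultrafilter is Tukey above `ℕ^ℕ`. -/
theorem stmt16 (k : ℕ) (U : Ultrafilter ℕ) (hU : Nonprincipal U)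
    (h : AlmostRapidK k U) : TukeyLE (ℕ → ℕ) (UltraPoset U) := by
  -- hat g : monotone-ish majorant of g
  set hat : (ℕ → ℕ) → ℕ → ℕ := fun g n => (Finset.range (n + 1)).sup g with hhat
  choose X hXU hXev using fun g => h (hat g)
  choose N hN using fun g => Filter.eventually_atTop.mp (hXev g)
  set F : (ℕ → ℕ) → UltraPoset U :=
    fun g => ⟨X g ∩ Set.Ici (N g + 1),
      inter_mem (hXU g) (Ici_mem_of_nonprincipal hU (N g + 1))⟩ with hF
  refine ⟨F, ?_⟩
  intro A hA
  intro ⟨b, hb⟩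
  -- b is an element of the dual subtype; its value C is a common subset
  set C : Set ℕ := b.1 with hC
  have hCU : C ∈ U := b.2
  have hCinf : C.Infinite := mem_infinite_of_nonprincipal hU hCU
  have hCsub : ∀ g ∈ A, C ⊆ X g ∩ Set.Ici (N g + 1) := by
    intro g hg
    have := hb (F g) ⟨g, hg, rfl⟩
    exact this
  apply hA
  -- construct a bound for A
  set nstar : ℕ := enum C 0 with hnstar
  refine ⟨fun n => expIter k (enum C) (nstar + n), ?_⟩
  intro g hg
  intro n
  have hsub := hCsub g hg
  have hnstarC : nstar ∈ C := Nat.nth_mem_of_infinite hCinf 0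
  have hnstarN : N g + 1 ≤ nstar := (hsub hnstarC).2
  -- enum C properties
  have hCmono : Monotone (enum C) := (Nat.nth_strictMono hCinf).monotone
  have hCsucc : ∀ m, m + 1 ≤ enum C m := by
    apply succ_le_of_strictMono (Nat.nth_strictMono hCinf)
    exact le_trans (Nat.le_add_left 1 (N g)) hnstarN
  -- comparison
  have hle : ∀ m, enum (X g) m ≤ enum C m :=
    nth_le_nth_of_subset hCinf (fun x hx => (hsub hx).1)
  have hcomp := (expIter_le k hle hCmono hCsucc).1
  calc g n ≤ hat g (nstar + n) := Finset.le_sup (Finset.mem_range.mpr (by omega))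
    _ ≤ expIter k (enum (X g)) (nstar + n) := hN g _ (by omega)
    _ ≤ expIter k (enum C) (nstar + n) := hcomp _
end

section
/- Assume the continuum hypothesis (2^ℵ₀ = ℵ₁). Then there exists a nonprincipal ultrafilter U on ℕ that is a p-point, is almost-rapid, and is not rapid. -/
open Set Filter

/-- A rapid ultrafilter. -/
def Rapid (U : Ultrafilter ℕ) : Prop :=
  ∀ g : ℕ → ℕ, ∃ X ∈ U, ∀ᶠ n in atTop, g n ≤ enum X n

/-- An almost-rapid (i.e. 1-almost-rapid) ultrafilter. -/
def AlmostRapid (U : Ultrafilter ℕ) : Prop :=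
  ∀ g : ℕ → ℕ, ∃ X ∈ U, ∀ᶠ n in atTop, g n ≤ expOnce (enum X) n

noncomputable section AuxCH
def Gf (n : ℕ) : ℕ := (n+1)*(n+1)
open Classical in
noncomputable def cnt (S : Set ℕ) : ℕ → ℕ := Nat.count (· ∈ S)
def LargeS (S : Set ℕ) : Prop := ∀ s N : ℕ, ∃ n, N ≤ n ∧ s * n ≤ cnt S (Gf n)

lemma cnt_zero (S : Set ℕ) : cnt S 0 = 0 := rfl

open Classical in
lemma cnt_succ (S : Set ℕ) (n : ℕ) :
    cnt S (n + 1) = cnt S n + (if n ∈ S then 1 else 0) := by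
  unfold cnt
  rw [Nat.count_succ]

open Classical in
lemma cnt_eq_card (S : Set ℕ) (n : ℕ) :
    cnt S n = ((Finset.range n).filter (· ∈ S)).card :=
  Nat.count_eq_card_filter_range _ n

lemma cnt_mono {S : Set ℕ} : Monotone (cnt S) := by
  apply monotone_nat_of_le_succ
  intro n
  rw [cnt_succ]
  omega

lemma cnt_le_self (S : Set ℕ) (n : ℕ) : cnt S n ≤ n := by
  induction n with
  | zero => simp [cnt_zero]
  | succ k ih => rw [cnt_succ]; split <;> omega

lemma cnt_mono_set {S T : Set ℕ} (h : S ⊆ T) (n : ℕ) : cnt S n ≤ cnt T n := by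
  induction n with
  | zero => simp [cnt_zero]
  | succ k ih =>
    rw [cnt_succ, cnt_succ]
    by_cases hk : k ∈ S
    · simp [hk, h hk]; omega
    · simp [hk]; omega

lemma cnt_split (S A : Set ℕ) (n : ℕ) : cnt S n ≤ cnt (S ∩ A) n + cnt (S \ A) n := by
  induction n with
  | zero => simp [cnt_zero]
  | succ k ih =>
    rw [cnt_succ, cnt_succ, cnt_succ]
    by_cases hS : k ∈ S
    · by_cases hA : k ∈ A
      · have h1 : k ∈ S ∩ A := ⟨hS, hA⟩
        have h2 : k ∉ S \ A := fun h => h.2 hA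
        simp [hS, h1, h2]; omega
      · have h1 : k ∉ S ∩ A := fun h => hA h.2
        have h2 : k ∈ S \ A := ⟨hS, hA⟩
        simp [hS, h1, h2]; omega
    · simp [hS]; omega

open Classical in
lemma cnt_le_card_of_finite {S : Set ℕ} (h : S.Finite) (n : ℕ) :
    cnt S n ≤ h.toFinset.card := by
  unfold cnt
  exact Nat.count_le_card (p := (· ∈ S)) h n

lemma LargeS.infinite {S : Set ℕ} (h : LargeS S) : S.Infinite := by
  by_contra hfin
  rw [Set.not_infinite] at hfin
  obtain ⟨n, hn, hc⟩ := h (hfin.toFinset.card + 1) 1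
  have := cnt_le_card_of_finite hfin (Gf n)
  nlinarith

lemma LargeS.mono {S T : Set ℕ} (h : S ⊆ T) (hS : LargeS S) : LargeS T := by
  intro s N
  obtain ⟨n, hn, hc⟩ := hS s N
  exact ⟨n, hn, hc.trans (cnt_mono_set h _)⟩

lemma largeS_univ : LargeS (Set.univ : Set ℕ) := by
  intro s N
  refine ⟨max s N, le_max_right _ _, ?_⟩
  have : cnt (Set.univ : Set ℕ) (Gf (max s N)) = Gf (max s N) := by
    have : ∀ m, cnt (Set.univ : Set ℕ) m = m := by
      intro m
      induction m with
      | zero => simp [cnt_zero]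
      | succ k ih => rw [cnt_succ]; simp [ih]
    exact this _
  rw [this]
  unfold Gf
  nlinarith [le_max_left s N, Nat.zero_le (max s N)]

lemma LargeS.diff_finite {S F : Set ℕ} (hS : LargeS S) (hF : F.Finite) :
    LargeS (S \ F) := by
  intro s N
  obtain ⟨n, hn, hc⟩ := hS (s + hF.toFinset.card) (max N 1)
  refine ⟨n, le_trans (le_max_left _ _) hn, ?_⟩
  have key : cnt S (Gf n) ≤ cnt (S ∩ F) (Gf n) + cnt (S \ F) (Gf n) := cnt_split S F (Gf n)
  have h2 : cnt (S ∩ F) (Gf n) ≤ hF.toFinset.card := by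
    have hfin : (S ∩ F).Finite := hF.subset (Set.inter_subset_right)
    refine (cnt_le_card_of_finite hfin (Gf n)).trans ?_
    apply Finset.card_le_card
    intro x hx
    simp only [Set.Finite.mem_toFinset] at *
    exact hx.2
  have hn1 : 1 ≤ n := le_trans (le_max_right _ _) hn
  nlinarith

lemma LargeS.split {S A : Set ℕ} (hS : LargeS S) (hA : ¬ LargeS (S ∩ A)) :
    LargeS (S \ A) := by
  unfold LargeS at hA
  push_neg at hA
  obtain ⟨s₀, N₀, hN₀⟩ := hA
  intro s N
  obtain ⟨n, hn, hc⟩ := hS (s + s₀) (max N N₀)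
  refine ⟨n, le_trans (le_max_left _ _) hn, ?_⟩
  have h1 : cnt (S ∩ A) (Gf n) < s₀ * n := hN₀ n (le_trans (le_max_right _ _) hn)
  have h2 := cnt_split S A (Gf n)
  nlinarith

lemma mem_of_enum {S : Set ℕ} (h : S.Infinite) (n : ℕ) : enum S n ∈ S :=
  Nat.nth_mem_of_infinite h n

lemma enum_strictMono {S : Set ℕ} (h : S.Infinite) : StrictMono (enum S) :=
  Nat.nth_strictMono h

open Classical in
lemma enum_lt_of_lt_cnt {S : Set ℕ} {k n : ℕ} (h : k < cnt S n) : enum S k < n := by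
  unfold cnt at h
  exact Nat.nth_lt_of_lt_count h

open Classical in
lemma le_enum_of_cnt_le {S : Set ℕ} (hS : S.Infinite) {v m : ℕ} (h : cnt S v ≤ m) :
    v ≤ enum S m := by
  by_contra hlt
  push_neg at hlt
  have h1 : cnt S (enum S m + 1) = m + 1 := by
    unfold cnt enum
    exact Nat.count_nth_succ_of_infinite (p := (· ∈ S)) hS m
  have h2 : cnt S (enum S m + 1) ≤ cnt S v := cnt_mono (by omega)
  omega


/-- STEP: inside a large set we can find a chunk of `s*n+1` elements, all in
`(max B (t+s*n+1), Gf n)`, with `n ≥ N`. -/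
lemma step_chunk {J : Set ℕ} (hJ : LargeS J) (s B t N : ℕ) :
    ∃ (n : ℕ) (C : Finset ℕ), N ≤ n ∧ C.card = s * n + 1 ∧ (↑C : Set ℕ) ⊆ J ∧
      ∀ x ∈ C, (max B (t + s * n + 1) < x ∧ x < Gf n) := by
  obtain ⟨n, hn, hc⟩ := hJ (2*s + B + t + 3) (max N 1)
  have hn1 : 1 ≤ n := le_trans (le_max_right _ _) hn
  have hNn : N ≤ n := le_trans (le_max_left _ _) hn
  set c := cnt J (Gf n) with hc_def
  have hinf : J.Infinite := hJ.infinite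
  have hcard : s * n + 1 ≤ c := by nlinarith
  refine ⟨n, (Finset.Ico (c - (s*n+1)) c).image (enum J), hNn, ?_, ?_, ?_⟩
  · rw [Finset.card_image_of_injective _ ((enum_strictMono hinf).injective)]
    rw [Nat.card_Ico]
    omega
  · intro x hx
    simp only [Finset.coe_image, Set.mem_image, Finset.mem_coe, Finset.mem_Ico] at hx
    obtain ⟨i, _, rfl⟩ := hx
    exact mem_of_enum hinf i
  · intro x hx
    simp only [Finset.mem_image, Finset.mem_Ico] at hx
    obtain ⟨i, ⟨hi1, hi2⟩, rfl⟩ := hx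
    constructor
    · have hle : i ≤ enum J i := (enum_strictMono hinf).le_apply
      have : s*n + B*n + t*n + 3*n - 1 ≤ i := by
        have : (2*s + B + t + 3) * n - (s*n+1) ≤ i := by omega
        calc s*n + B*n + t*n + 3*n - 1 = (2*s + B + t + 3) * n - (s*n+1) := by ring_nf; omega
          _ ≤ i := this
      have hB : B * n ≥ B := Nat.le_mul_of_pos_right B hn1
      have ht : t * n ≥ t := Nat.le_mul_of_pos_right t hn1
      have h3 : 3 * n ≥ 3 := by omega
      have : max B (t + s*n + 1) ≤ B + t + s*n + 1 := by
        apply max_le <;> omega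
      omega
    · exact enum_lt_of_lt_cnt (by omega)

section Build

variable (J : ℕ → Set ℕ) (hJ : ∀ k, LargeS (J k)) (h : ℕ → ℕ)

include hJ in
lemma stepEx (k t p : ℕ) : ∃ (n : ℕ) (C : Finset ℕ),
    (k+1) ≤ n ∧ C.card = (k+1) * n + 1 ∧ (↑C : Set ℕ) ⊆ J k ∧
    ∀ x ∈ C, (max (max p ((Finset.range (t+1)).sup h)) (t + (k+1) * n + 1) < x ∧ x < Gf n) :=
  step_chunk (hJ k) (k+1) (max p ((Finset.range (t+1)).sup h)) t (k+1)

noncomputable def stepN (k t p : ℕ) : ℕ := (stepEx J hJ h k t p).choose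

noncomputable def stepC (k t p : ℕ) : Finset ℕ :=
  (stepEx J hJ h k t p).choose_spec.choose

lemma stepSpec (k t p : ℕ) :
    (k+1) ≤ stepN J hJ h k t p ∧
    (stepC J hJ h k t p).card = (k+1) * stepN J hJ h k t p + 1 ∧
    (↑(stepC J hJ h k t p) : Set ℕ) ⊆ J k ∧
    ∀ x ∈ stepC J hJ h k t p,
      (max (max p ((Finset.range (t+1)).sup h)) (t + (k+1) * stepN J hJ h k t p + 1) < x ∧
        x < Gf (stepN J hJ h k t p)) :=
  (stepEx J hJ h k t p).choose_spec.choose_spec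

noncomputable def prevState : ℕ → ℕ × ℕ
  | 0 => (0, 0)
  | k+1 =>
    let s := prevState k
    let n := stepN J hJ h k s.1 s.2
    let C := stepC J hJ h k s.1 s.2
    (s.1 + (k+1) * n + 1, max s.2 (C.sup id))

noncomputable def nK (k : ℕ) : ℕ := stepN J hJ h k (prevState J hJ h k).1 (prevState J hJ h k).2
noncomputable def cK (k : ℕ) : Finset ℕ :=
  stepC J hJ h k (prevState J hJ h k).1 (prevState J hJ h k).2
noncomputable def tK (k : ℕ) : ℕ := (prevState J hJ h (k+1)).1
noncomputable def pK (k : ℕ) : ℕ := (prevState J hJ h (k+1)).2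

lemma tK_eq (k : ℕ) : tK J hJ h k = (prevState J hJ h k).1 + (k+1) * nK J hJ h k + 1 := rfl
lemma pK_eq (k : ℕ) : pK J hJ h k = max (prevState J hJ h k).2 ((cK J hJ h k).sup id) := rfl
lemma tprev_succ (k : ℕ) : (prevState J hJ h (k+1)).1 = tK J hJ h k := rfl
lemma pprev_succ (k : ℕ) : (prevState J hJ h (k+1)).2 = pK J hJ h k := rfl

lemma nK_ge (k : ℕ) : k + 1 ≤ nK J hJ h k := (stepSpec J hJ h k _ _).1
lemma cK_card (k : ℕ) : (cK J hJ h k).card = (k+1) * nK J hJ h k + 1 :=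
  (stepSpec J hJ h k _ _).2.1
lemma cK_sub (k : ℕ) : (↑(cK J hJ h k) : Set ℕ) ⊆ J k := (stepSpec J hJ h k _ _).2.2.1
lemma cK_elems (k : ℕ) : ∀ x ∈ cK J hJ h k,
    (max (max (prevState J hJ h k).2 ((Finset.range ((prevState J hJ h k).1+1)).sup h))
      ((prevState J hJ h k).1 + (k+1) * nK J hJ h k + 1) < x ∧ x < Gf (nK J hJ h k)) :=
  (stepSpec J hJ h k _ _).2.2.2

-- elements of chunk k are > tK k, > previous p, > the h-sup, ≤ pK k
lemma cK_gt_tK (k : ℕ) : ∀ x ∈ cK J hJ h k, tK J hJ h k < x := by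
  intro x hx
  have := (cK_elems J hJ h k x hx).1
  rw [tK_eq]
  omega

lemma cK_gt_pprev (k : ℕ) : ∀ x ∈ cK J hJ h k, (prevState J hJ h k).2 < x := by
  intro x hx
  have := (cK_elems J hJ h k x hx).1
  omega

lemma cK_gt_hsup (k : ℕ) : ∀ x ∈ cK J hJ h k,
    (Finset.range ((prevState J hJ h k).1+1)).sup h < x := by
  intro x hx
  have := (cK_elems J hJ h k x hx).1
  omega

lemma cK_le_pK (k : ℕ) : ∀ x ∈ cK J hJ h k, x ≤ pK J hJ h k := by
  intro x hx
  rw [pK_eq]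
  exact le_max_of_le_right (Finset.le_sup (f := id) hx)

lemma pK_mono_succ (k : ℕ) : pK J hJ h k ≤ pK J hJ h (k+1) := by
  conv_rhs => rw [pK_eq]
  rw [pprev_succ]
  exact le_max_left _ _

lemma pK_mono : Monotone (pK J hJ h) := monotone_nat_of_le_succ (pK_mono_succ J hJ h)

lemma tK_lt_succ (k : ℕ) : tK J hJ h k < tK J hJ h (k+1) := by
  conv_rhs => rw [tK_eq]
  rw [tprev_succ]
  omega

lemma tK_strictMono : StrictMono (tK J hJ h) := strictMono_nat_of_lt_succ (tK_lt_succ J hJ h)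

lemma tprev_le_tK (k : ℕ) : (prevState J hJ h k).1 ≤ tK J hJ h k := by
  rw [tK_eq]; omega

lemma tK_ge (k : ℕ) : k + 1 ≤ tK J hJ h k := by
  induction k with
  | zero => rw [tK_eq]; have := nK_ge J hJ h 0; omega
  | succ j ih => have := tK_lt_succ J hJ h j; omega

/-- the union set -/
def ZSet : Set ℕ := {x | ∃ k, x ∈ cK J hJ h k}

lemma cK_sub_Z (k : ℕ) : (↑(cK J hJ h k) : Set ℕ) ⊆ ZSet J hJ h := fun x hx => ⟨k, hx⟩


noncomputable def accK : ℕ → Finset ℕ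
  | 0 => cK J hJ h 0
  | k+1 => accK k ∪ cK J hJ h (k+1)

lemma acc_le_pK (k : ℕ) : ∀ x ∈ accK J hJ h k, x ≤ pK J hJ h k := by
  induction k with
  | zero => exact cK_le_pK J hJ h 0
  | succ j ih =>
    intro x hx
    rw [accK] at hx
    rcases Finset.mem_union.1 hx with hx | hx
    · exact (ih x hx).trans (pK_mono_succ J hJ h j)
    · exact cK_le_pK J hJ h (j+1) x hx

lemma cK_sub_acc {j k : ℕ} (hjk : j ≤ k) : cK J hJ h j ⊆ accK J hJ h k := by
  induction k with
  | zero =>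
    have : j = 0 := by omega
    subst this; rw [accK]
  | succ i ih =>
    rw [accK]
    rcases Nat.lt_or_ge j (i+1) with hj | hj
    · exact (ih (by omega)).trans Finset.subset_union_left
    · have : j = i + 1 := by omega
      subst this
      exact Finset.subset_union_right

lemma acc_card (k : ℕ) : (accK J hJ h k).card = tK J hJ h k := by
  induction k with
  | zero =>
    rw [accK, cK_card, tK_eq]
    simp [prevState]
  | succ j ih =>
    rw [accK]
    have hdisj : Disjoint (accK J hJ h j) (cK J hJ h (j+1)) := by
      rw [Finset.disjoint_left]
      intro x hx hx'
      have h1 : x ≤ pK J hJ h j := acc_le_pK J hJ h j x hx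
      have h2 : (prevState J hJ h (j+1)).2 < x := cK_gt_pprev J hJ h (j+1) x hx'
      rw [pprev_succ] at h2
      omega
    rw [Finset.card_union_of_disjoint hdisj, ih, cK_card]
    rw [tK_eq J hJ h (j+1), tprev_succ]
    omega

lemma mem_acc_iff (k : ℕ) (x : ℕ) :
    x ∈ accK J hJ h k ↔ (x ∈ ZSet J hJ h ∧ x ≤ pK J hJ h k) := by
  constructor
  · intro hx
    have : ∃ j, j ≤ k ∧ x ∈ cK J hJ h j := by
      induction k with
      | zero => exact ⟨0, le_refl 0, by rw [accK] at hx; exact hx⟩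
      | succ i ih =>
        rw [accK] at hx
        rcases Finset.mem_union.1 hx with hx | hx
        · obtain ⟨j, hj, hxj⟩ := ih hx
          exact ⟨j, by omega, hxj⟩
        · exact ⟨i+1, le_refl _, hx⟩
    obtain ⟨j, hj, hxj⟩ := this
    exact ⟨⟨j, hxj⟩, acc_le_pK J hJ h k x (cK_sub_acc J hJ h hj hxj)⟩
  · rintro ⟨⟨j, hxj⟩, hle⟩
    rcases le_or_gt j k with hjk | hjk
    · exact cK_sub_acc J hJ h hjk hxj
    · exfalso
      have h2 : (prevState J hJ h j).2 < x := cK_gt_pprev J hJ h j x hxj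
      have h3 : pK J hJ h k ≤ (prevState J hJ h j).2 := by
        obtain ⟨i, rfl⟩ : ∃ i, j = i + 1 := ⟨j - 1, by omega⟩
        rw [pprev_succ]
        exact pK_mono J hJ h (by omega)
      omega

open Classical in
lemma cnt_Z_pK (k : ℕ) : cnt (ZSet J hJ h) (pK J hJ h k + 1) = tK J hJ h k := by
  rw [cnt_eq_card, ← acc_card J hJ h k]
  congr 1
  ext x
  simp only [Finset.mem_filter, Finset.mem_range, mem_acc_iff J hJ h k]
  constructor
  · rintro ⟨h1, h2⟩; exact ⟨h2, by omega⟩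
  · rintro ⟨h1, h2⟩; exact ⟨by omega, h1⟩

open Classical in
lemma card_le_cnt {C : Finset ℕ} {S : Set ℕ} {n : ℕ} (hsub : (↑C : Set ℕ) ⊆ S)
    (hlt : ∀ x ∈ C, x < n) : C.card ≤ cnt S n := by
  rw [cnt_eq_card]
  apply Finset.card_le_card
  intro x hx
  simp only [Finset.mem_filter, Finset.mem_range]
  exact ⟨hlt x hx, hsub hx⟩

lemma largeS_Z : LargeS (ZSet J hJ h) := by
  intro s N
  set k := max s N with hk
  refine ⟨nK J hJ h k, ?_, ?_⟩
  · have := nK_ge J hJ h k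
    omega
  · have h1 : (cK J hJ h k).card ≤ cnt (ZSet J hJ h) (Gf (nK J hJ h k)) := by
      apply card_le_cnt (cK_sub_Z J hJ h k)
      intro x hx
      exact (cK_elems J hJ h k x hx).2
    rw [cK_card] at h1
    have : s ≤ k + 1 := by omega
    nlinarith

lemma Z_infinite : (ZSet J hJ h).Infinite := (largeS_Z J hJ h).infinite

lemma J_antitone {i j : ℕ} (hdec : ∀ k, J (k+1) ⊆ J k) (hij : i ≤ j) : J j ⊆ J i := by
  induction j with
  | zero =>
    have : i = 0 := by omega
    subst this; exact subset_rfl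
  | succ m ih =>
    rcases Nat.lt_or_ge i (m+1) with hi | hi
    · exact (hdec m).trans (ih (by omega))
    · have : i = m + 1 := by omega
      subst this; exact subset_rfl

lemma Z_diff_finite (hdec : ∀ k, J (k+1) ⊆ J k) (i : ℕ) :
    ((ZSet J hJ h) \ J i).Finite := by
  apply Set.Finite.subset (Finset.finite_toSet (accK J hJ h i))
  rintro x ⟨⟨j, hxj⟩, hxi⟩
  rcases le_or_gt j i with hji | hji
  · exact cK_sub_acc J hJ h hji hxj
  · exfalso
    exact hxi (J_antitone J (fun k => hdec k) (by omega) (cK_sub J hJ h j hxj))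

lemma Z_sub_J0 (hdec : ∀ k, J (k+1) ⊆ J k) : ZSet J hJ h ⊆ J 0 := by
  rintro x ⟨j, hxj⟩
  exact J_antitone J hdec (Nat.zero_le j) (cK_sub J hJ h j hxj)

lemma Z_pos : ∀ x ∈ ZSet J hJ h, 1 ≤ x := by
  rintro x ⟨j, hxj⟩
  have h1 := cK_gt_tK J hJ h j x hxj
  have h2 := tK_ge J hJ h j
  omega

lemma enumZ_ge (m : ℕ) : m + 1 ≤ enum (ZSet J hJ h) m := by
  induction m with
  | zero => exact Z_pos J hJ h _ (mem_of_enum (Z_infinite J hJ h) 0)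
  | succ j ih =>
    have := enum_strictMono (Z_infinite J hJ h) (show j < j + 1 by omega)
    omega

lemma expOnce_ge_enumZ (m : ℕ) : enum (ZSet J hJ h) m ≤ expOnce (enum (ZSet J hJ h)) m := by
  induction m with
  | zero => exact le_refl _
  | succ j ih =>
    show enum (ZSet J hJ h) (j+1) ≤ enum (ZSet J hJ h) (expOnce (enum (ZSet J hJ h)) j)
    apply (enum_strictMono (Z_infinite J hJ h)).monotone
    have := enumZ_ge J hJ h j
    omega

lemma enumZ_gt_pK {k m : ℕ} (hm : tK J hJ h k ≤ m) :
    pK J hJ h k < enum (ZSet J hJ h) m := by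
  have := le_enum_of_cnt_le (Z_infinite J hJ h)
    (v := pK J hJ h k + 1) (m := m) (by rw [cnt_Z_pK]; exact hm)
  omega

lemma Z_gt_tK0 : ∀ x ∈ ZSet J hJ h, tK J hJ h 0 < x := by
  rintro x ⟨j, hxj⟩
  have h1 := cK_gt_tK J hJ h j x hxj
  have h2 : tK J hJ h 0 ≤ tK J hJ h j := (tK_strictMono J hJ h).monotone (Nat.zero_le j)
  omega

lemma Z_gt_of_gt_pK {k : ℕ} : ∀ x ∈ ZSet J hJ h, pK J hJ h k < x →
    (tK J hJ h (k+1) < x ∧ ∀ m ≤ tK J hJ h k, h m < x) := by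
  rintro x ⟨j, hxj⟩ hgt
  have hjk : k + 1 ≤ j := by
    by_contra hb
    push_neg at hb
    have h1 : x ≤ pK J hJ h j := cK_le_pK J hJ h j x hxj
    have h2 : pK J hJ h j ≤ pK J hJ h k := pK_mono J hJ h (by omega)
    omega
  constructor
  · have h1 := cK_gt_tK J hJ h j x hxj
    have h2 : tK J hJ h (k+1) ≤ tK J hJ h j := (tK_strictMono J hJ h).monotone hjk
    omega
  · intro m hm
    have h1 := cK_gt_hsup J hJ h j x hxj
    have h2 : (prevState J hJ h j).1 = tK J hJ h (j-1) := by
      obtain ⟨i, rfl⟩ : ∃ i, j = i + 1 := ⟨j - 1, by omega⟩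
      rw [tprev_succ]
      simp
    have h3 : tK J hJ h k ≤ tK J hJ h (j-1) := (tK_strictMono J hJ h).monotone (by omega)
    have h4 : h m ≤ (Finset.range ((prevState J hJ h j).1 + 1)).sup h := by
      apply Finset.le_sup
      rw [Finset.mem_range]
      omega
    omega

lemma exp_growth : ∀ m, 1 ≤ m → h m ≤ expOnce (enum (ZSet J hJ h)) m := by
  intro m hm
  have hex : ∃ k, m ≤ tK J hJ h k := ⟨m, by have := tK_ge J hJ h m; omega⟩
  classical
  obtain ⟨k, hk1, hkmin⟩ : ∃ k, m ≤ tK J hJ h k ∧ ∀ j, j < k → ¬ m ≤ tK J hJ h j :=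
    ⟨Nat.find hex, Nat.find_spec hex, fun j hj => Nat.find_min hex hj⟩
  -- step 1: enum Z (m-1) ≥ tK k
  have hstep1 : tK J hJ h k ≤ enum (ZSet J hJ h) (m - 1) := by
    rcases Nat.eq_zero_or_pos k with h0 | hpos
    · have : tK J hJ h 0 < enum (ZSet J hJ h) (m-1) :=
        Z_gt_tK0 J hJ h _ (mem_of_enum (Z_infinite J hJ h) (m-1))
      rw [h0]
      omega
    · have hklt : ¬ m ≤ tK J hJ h (k-1) := hkmin (k-1) (by omega)
      push_neg at hklt
      have h1 : tK J hJ h (k-1) ≤ m - 1 := by omega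
      have h2 : pK J hJ h (k-1) < enum (ZSet J hJ h) (m-1) := enumZ_gt_pK J hJ h h1
      have h3 := (Z_gt_of_gt_pK J hJ h (k := k-1) _
        (mem_of_enum (Z_infinite J hJ h) (m-1)) h2).1
      have heq : k - 1 + 1 = k := by omega
      rw [heq] at h3
      omega
  -- step 2: expOnce σ m ≥ σ (tK k)
  have hstep2 : enum (ZSet J hJ h) (tK J hJ h k) ≤ expOnce (enum (ZSet J hJ h)) m := by
    obtain ⟨m', rfl⟩ : ∃ m', m = m' + 1 := ⟨m - 1, by omega⟩
    show enum (ZSet J hJ h) (tK J hJ h k) ≤ enum (ZSet J hJ h) (expOnce (enum (ZSet J hJ h)) m')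
    apply (enum_strictMono (Z_infinite J hJ h)).monotone
    have h4 : (m' + 1 : ℕ) - 1 = m' := by omega
    rw [h4] at hstep1
    exact hstep1.trans (expOnce_ge_enumZ J hJ h m')
  -- step 3: enum Z (tK k) > h m
  have h2 : pK J hJ h k < enum (ZSet J hJ h) (tK J hJ h k) := enumZ_gt_pK J hJ h (le_refl _)
  have h3 := (Z_gt_of_gt_pK J hJ h (k := k) _
    (mem_of_enum (Z_infinite J hJ h) (tK J hJ h k)) h2).2 m hk1
  omega

end Build

/-- The MAIN combinatorial lemma. -/
lemma main_lemma (J : ℕ → Set ℕ) (hJ : ∀ k, LargeS (J k)) (h : ℕ → ℕ)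
    (hdec : ∀ k, J (k+1) ⊆ J k) :
    ∃ Z : Set ℕ, LargeS Z ∧ Z ⊆ J 0 ∧ (∀ i, (Z \ J i).Finite) ∧
      (∀ m, 1 ≤ m → h m ≤ expOnce (enum Z) m) :=
  ⟨ZSet J hJ h, largeS_Z J hJ h, Z_sub_J0 J hJ h hdec, Z_diff_finite J hJ h hdec,
    exp_growth J hJ h⟩

end AuxCH

section Stage

/-- the decreasing intersections of a countable family -/
def interI (e : ℕ → Set ℕ) : ℕ → Set ℕ
  | 0 => e 0
  | k+1 => interI e k ∩ e (k+1)

lemma interI_antitone (e : ℕ → Set ℕ) {j k : ℕ} (hjk : j ≤ k) : interI e k ⊆ interI e j := by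
  induction k with
  | zero =>
    have : j = 0 := by omega
    subst this; exact subset_rfl
  | succ i ih =>
    rcases lt_or_ge j (i+1) with hj | hj
    · exact (Set.inter_subset_left).trans (ih (by omega))
    · have : j = i + 1 := by omega
      subst this; exact subset_rfl

lemma interI_sub (e : ℕ → Set ℕ) {i k : ℕ} (hik : i ≤ k) : interI e k ⊆ e i := by
  refine (interI_antitone e hik).trans ?_
  cases i with
  | zero => exact subset_rfl
  | succ j => exact Set.inter_subset_right

lemma interI_large (e : ℕ → Set ℕ) (he : ∀ i, LargeS (e i))
    (hchain : ∀ i j, (e i \ e j).Finite ∨ (e j \ e i).Finite) (k : ℕ) :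
    LargeS (interI e k) := by
  have : ∃ (F : Set ℕ) (i : ℕ), F.Finite ∧ e i \ F ⊆ interI e k := by
    induction k with
    | zero => exact ⟨∅, 0, Set.finite_empty, by simp [interI]⟩
    | succ j ih =>
      obtain ⟨F, i, hF, hsub⟩ := ih
      rcases hchain i (j+1) with hfin | hfin
      · refine ⟨F ∪ (e i \ e (j+1)), i, hF.union hfin, ?_⟩
        intro x hx
        constructor
        · exact hsub ⟨hx.1, fun hxF => hx.2 (Or.inl hxF)⟩
        · by_contra hne
          exact hx.2 (Or.inr ⟨hx.1, hne⟩)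
      · refine ⟨(e (j+1) \ e i) ∪ F, j+1, hfin.union hF, ?_⟩
        intro x hx
        have hxi : x ∈ e i := by
          by_contra hne
          exact hx.2 (Or.inl ⟨hx.1, hne⟩)
        exact ⟨hsub ⟨hxi, fun hxF => hx.2 (Or.inr hxF)⟩, hx.1⟩
  obtain ⟨F, i, hF, hsub⟩ := this
  exact ((he i).diff_finite hF).mono hsub

lemma stage_core (e : ℕ → Set ℕ) (he : ∀ i, LargeS (e i))
    (hchain : ∀ i j, (e i \ e j).Finite ∨ (e j \ e i).Finite)
    (A : Set ℕ) (h : ℕ → ℕ) :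
    ∃ Z : Set ℕ, LargeS Z ∧ (∀ i, (Z \ e i).Finite) ∧ (Z ⊆ A ∨ Z ⊆ Aᶜ) ∧
      (∀ m, 1 ≤ m → h m ≤ expOnce (enum Z) m) := by
  have hIlarge : ∀ k, LargeS (interI e k) := interI_large e he hchain
  have key : ∃ B : Set ℕ, (B = A ∨ B = Aᶜ) ∧ ∀ k, LargeS (interI e k ∩ B) := by
    by_cases hA : ∀ k, LargeS (interI e k ∩ A)
    · exact ⟨A, Or.inl rfl, hA⟩
    · push_neg at hA
      obtain ⟨k₀, hk₀⟩ := hA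
      refine ⟨Aᶜ, Or.inr rfl, fun k => ?_⟩
      have h1 : LargeS (interI e (max k k₀) ∩ Aᶜ) := by
        have h2 : ¬ LargeS (interI e (max k k₀) ∩ A) := by
          intro hl
          exact hk₀ (hl.mono (Set.inter_subset_inter_left A
            (interI_antitone e (le_max_right k k₀))))
        have := (hIlarge (max k k₀)).split h2
        rwa [Set.diff_eq] at this
      exact h1.mono (Set.inter_subset_inter_left _ (interI_antitone e (le_max_left k k₀)))
  obtain ⟨B, hB, hlarge⟩ := key
  set J : ℕ → Set ℕ := fun k => interI e k ∩ B with hJdef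
  have hdec : ∀ k, J (k+1) ⊆ J k :=
    fun k => Set.inter_subset_inter_left B (interI_antitone e (by omega))
  obtain ⟨Z, hZlarge, hZsub, hZdiff, hZexp⟩ := main_lemma J hlarge h hdec
  refine ⟨Z, hZlarge, ?_, ?_, hZexp⟩
  · intro i
    apply (hZdiff i).subset
    intro x hx
    exact ⟨hx.1, fun hxJ => hx.2 ((interI_sub e (le_refl i)) hxJ.1)⟩
  · rcases hB with rfl | rfl
    · left; exact hZsub.trans Set.inter_subset_right
    · right; exact hZsub.trans Set.inter_subset_right

end Stage
section Transfinite

open Cardinal Ordinal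

variable (As : Ordinal.{0} → Set ℕ) (Hs : Ordinal.{0} → ℕ → ℕ)

def stagePropP (o : Ordinal.{0}) (prev : ∀ o', o' < o → Set ℕ) (Z : Set ℕ) : Prop :=
  LargeS Z ∧ (∀ o' (h' : o' < o), (Z \ prev o' h').Finite) ∧
    (Z ⊆ As o ∨ Z ⊆ (As o)ᶜ) ∧ (∀ m, 1 ≤ m → Hs o m ≤ expOnce (enum Z) m)

open Classical in
noncomputable def Yb : Ordinal.{0} → Set ℕ :=
  WellFounded.fix Ordinal.lt_wf (fun o IH =>
    if H : ∃ Z, stagePropP As Hs o (fun o' h' => IH o' h') Z then H.choose else Set.univ)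

open Classical in
lemma Yb_eq (o : Ordinal.{0}) : Yb As Hs o =
    if H : ∃ Z, stagePropP As Hs o (fun o' _ => Yb As Hs o') Z then H.choose
    else Set.univ := by
  unfold Yb
  rw [WellFounded.fix_eq]

include As Hs in
lemma stage_exists (o : Ordinal.{0}) (ho : o.card ≤ ℵ₀)
    (prev : ∀ o' : Ordinal.{0}, o' < o → Set ℕ)
    (hLarge : ∀ o' h', LargeS (prev o' h'))
    (hchain : ∀ o₁ h₁ o₂ h₂,
      (prev o₁ h₁ \ prev o₂ h₂).Finite ∨ (prev o₂ h₂ \ prev o₁ h₁).Finite) :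
    ∃ Z, stagePropP As Hs o prev Z := by
  rcases isEmpty_or_nonempty (Set.Iio o) with hemp | hne
  · have hnone : ∀ o', ¬ o' < o := fun o' ho' => hemp.false ⟨o', ho'⟩
    obtain ⟨Z, h1, _, h3, h4⟩ := stage_core (fun _ => Set.univ) (fun _ => largeS_univ)
      (fun _ _ => Or.inl (by simp)) (As o) (Hs o)
    exact ⟨Z, h1, fun o' h' => absurd h' (hnone o'), h3, h4⟩
  · have hcnt : Countable (Set.Iio o) := by
      rw [← Cardinal.mk_le_aleph0_iff, Ordinal.mk_Iio_ordinal]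
      calc Cardinal.lift.{1} o.card ≤ Cardinal.lift.{1} ℵ₀ := Cardinal.lift_le.mpr ho
        _ = ℵ₀ := Cardinal.lift_aleph0
    obtain ⟨g, hg⟩ := exists_surjective_nat (Set.Iio o)
    set e : ℕ → Set ℕ := fun i => prev (g i).1 (g i).2 with he_def
    obtain ⟨Z, h1, h2, h3, h4⟩ := stage_core e
      (fun i => hLarge (g i).1 (g i).2)
      (fun i j => hchain (g i).1 (g i).2 (g j).1 (g j).2)
      (As o) (Hs o)
    refine ⟨Z, h1, ?_, h3, h4⟩
    intro o' h'
    obtain ⟨i, hi⟩ := hg ⟨o', h'⟩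
    have heq : e i = prev o' h' := by
      show prev (g i).1 (g i).2 = prev o' h'
      rw [hi]
    rw [← heq]
    exact h2 i

lemma Yb_inv : ∀ o : Ordinal.{0}, o < (Cardinal.aleph 1).ord →
    stagePropP As Hs o (fun o' _ => Yb As Hs o') (Yb As Hs o) := by
  intro o
  induction o using Ordinal.induction with
  | h o IH =>
  intro ho
  have hcard : o.card ≤ ℵ₀ := by
    have h1 := Cardinal.lt_ord.1 ho
    rwa [← Cardinal.succ_aleph0, Order.lt_succ_iff] at h1
  have hex : ∃ Z, stagePropP As Hs o (fun o' _ => Yb As Hs o') Z := by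
    apply stage_exists As Hs o hcard
    · intro o' h'
      exact (IH o' h' (h'.trans ho)).1
    · intro o₁ h₁ o₂ h₂
      rcases lt_trichotomy o₁ o₂ with h | h | h
      · exact Or.inr ((IH o₂ h₂ (h₂.trans ho)).2.1 o₁ h)
      · subst h; exact Or.inl (by simp)
      · exact Or.inl ((IH o₁ h₁ (h₁.trans ho)).2.1 o₂ h)
  rw [Yb_eq As Hs o, dif_pos hex]
  exact hex.choose_spec

end Transfinite
section Final

open Cardinal Ordinal

lemma build_filter (Y : Ordinal.{0} → Set ℕ)
    (hlarge : ∀ o, o < (aleph 1).ord → LargeS (Y o))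
    (hchain : ∀ o₁ o₂ : Ordinal.{0}, o₁ ≤ o₂ → o₂ < (aleph 1).ord → (Y o₂ \ Y o₁).Finite)
    (hdecide : ∀ A : Set ℕ, ∃ o, o < (aleph 1).ord ∧ (Y o ⊆ A ∨ Y o ⊆ Aᶜ))
    (hexp : ∀ h : ℕ → ℕ, ∃ o, o < (aleph 1).ord ∧
      ∀ m, 1 ≤ m → h m ≤ expOnce (enum (Y o)) m) :
    ∃ U : Ultrafilter ℕ, Nonprincipal U ∧ IsPPoint U ∧ AlmostRapid U ∧ ¬ Rapid U := by
  have h0 : (0 : Ordinal) < (aleph 1).ord := by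
    rw [Cardinal.lt_ord]
    simpa using lt_of_le_of_lt (zero_le ℵ₀) aleph0_lt_aleph_one
  have hmem_aux : ∀ {o₁ o₂ : Ordinal.{0}} {A : Set ℕ}, o₂ < (aleph 1).ord →
      o₁ ≤ o₂ → (Y o₁ \ A).Finite → (Y o₂ \ A).Finite := by
    intro o₁ o₂ A h₂ hle hf
    apply ((hchain o₁ o₂ hle h₂).union hf).subset
    intro x hx
    by_cases hxy : x ∈ Y o₁
    · exact Or.inr ⟨hxy, hx.2⟩
    · exact Or.inl ⟨hx.1, hxy⟩
  set F : Filter ℕ :=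
    { sets := {A | ∃ o, o < (aleph 1).ord ∧ (Y o \ A).Finite}
      univ_sets := ⟨0, h0, by simp⟩
      sets_of_superset := by
        rintro A B ⟨o, ho, hf⟩ hAB
        exact ⟨o, ho, hf.subset (Set.diff_subset_diff_right hAB)⟩
      inter_sets := by
        rintro A B ⟨o₁, h₁, f₁⟩ ⟨o₂, h₂, f₂⟩
        have hsub : ∀ o : Ordinal.{0}, Y o \ (A ∩ B) ⊆ (Y o \ A) ∪ (Y o \ B) := by
          intro o x hx
          by_cases hxA : x ∈ A
          · exact Or.inr ⟨hx.1, fun hB => hx.2 ⟨hxA, hB⟩⟩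
          · exact Or.inl ⟨hx.1, hxA⟩
        rcases le_total o₁ o₂ with hle | hle
        · exact ⟨o₂, h₂, (((hmem_aux h₂ hle f₁).union f₂).subset (hsub o₂))⟩
        · exact ⟨o₁, h₁, ((f₁.union (hmem_aux h₁ hle f₂)).subset (hsub o₁))⟩ }
    with hF
  have hmemF : ∀ A : Set ℕ, A ∈ F ↔ ∃ o, o < (aleph 1).ord ∧ (Y o \ A).Finite :=
    fun A => Iff.rfl
  have hYmem : ∀ o, o < (aleph 1).ord → Y o ∈ F := by
    intro o ho
    exact (hmemF _).2 ⟨o, ho, by simp⟩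
  have hnotboth : ∀ s : Set ℕ, s ∈ F → sᶜ ∈ F → False := by
    intro s hs hsc
    obtain ⟨o₁, h₁, f₁⟩ := (hmemF _).1 hs
    obtain ⟨o₂, h₂, f₂⟩ := (hmemF _).1 hsc
    have hfin : ∀ o, o < (aleph 1).ord → (Y o \ s).Finite → (Y o \ sᶜ).Finite →
        False := by
      intro o ho g₁ g₂
      have : Y o ⊆ (Y o \ s) ∪ (Y o \ sᶜ) := by
        intro x hx
        by_cases hxs : x ∈ s
        · exact Or.inr ⟨hx, fun hc => hc hxs⟩
        · exact Or.inl ⟨hx, hxs⟩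
      exact (hlarge o ho).infinite ((g₁.union g₂).subset this)
    rcases le_total o₁ o₂ with hle | hle
    · exact hfin o₂ h₂ (hmem_aux h₂ hle f₁) f₂
    · exact hfin o₁ h₁ f₁ (hmem_aux h₁ hle f₂)
  have hcompl : ∀ s : Set ℕ, sᶜ ∉ F ↔ s ∈ F := by
    intro s
    constructor
    · intro hnot
      obtain ⟨o, ho, hor⟩ := hdecide s
      rcases hor with hsub | hsub
      · exact (hmemF _).2 ⟨o, ho, by
          have : Y o \ s = ∅ := by
            ext x; simp only [Set.mem_diff, Set.mem_empty_iff_false, iff_false]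
            rintro ⟨hx, hns⟩; exact hns (hsub hx)
          rw [this]; exact Set.finite_empty⟩
      · exfalso
        apply hnot
        refine (hmemF _).2 ⟨o, ho, ?_⟩
        have : Y o \ sᶜ = ∅ := by
          ext x; simp only [Set.mem_diff, Set.mem_empty_iff_false, iff_false]
          rintro ⟨hx, hns⟩; exact hns (hsub hx)
        rw [this]; exact Set.finite_empty
    · intro hs hsc
      exact hnotboth s hs hsc
  refine ⟨Ultrafilter.ofComplNotMemIff F hcompl, ?_, ?_, ?_, ?_⟩
  · -- Nonprincipal
    intro n hn
    obtain ⟨o, ho, hf⟩ := (hmemF _).1 hn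
    apply (hlarge o ho).infinite
    apply (hf.union (Set.finite_singleton n)).subset
    intro x hx
    by_cases hxn : x = n
    · exact Or.inr (by simp [hxn])
    · exact Or.inl ⟨hx, by simp [hxn]⟩
  · -- PPoint
    intro X hX
    have hXo : ∀ n, ∃ o, o < (aleph 1).ord ∧ (Y o \ X n).Finite :=
      fun n => (hmemF _).1 (hX n)
    choose os hos hfin using hXo
    have hsup : iSup os < (aleph 1).ord := by
      apply Ordinal.iSup_lt_ord
      · rw [Cardinal.mk_nat, Cardinal.isRegular_aleph_one.cof_eq]
        exact aleph0_lt_aleph_one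
      · exact hos
    refine ⟨Y (iSup os), hYmem _ hsup, ?_⟩
    intro n
    exact hmem_aux hsup (Ordinal.le_iSup os n) (hfin n)
  · -- AlmostRapid
    intro g
    obtain ⟨o, ho, hg⟩ := hexp g
    refine ⟨Y o, hYmem o ho, ?_⟩
    rw [Filter.eventually_atTop]
    exact ⟨1, hg⟩
  · -- not Rapid
    intro hR
    obtain ⟨X, hXU, hev⟩ := hR Gf
    obtain ⟨o, ho, hf⟩ := (hmemF _).1 hXU
    have hXlarge : LargeS X := by
      apply ((hlarge o ho).diff_finite hf).mono
      intro x hx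
      by_contra hnx
      exact hx.2 ⟨hx.1, hnx⟩
    obtain ⟨N₀, hN₀⟩ := Filter.eventually_atTop.1 hev
    obtain ⟨n, hn, hc⟩ := hXlarge 2 (max N₀ 1)
    have h1 : n < cnt X (Gf n) := by
      have : 1 ≤ n := le_trans (le_max_right _ _) hn
      omega
    have h2 : enum X n < Gf n := enum_lt_of_lt_cnt h1
    have h3 : Gf n ≤ enum X n := hN₀ n (le_trans (le_max_left _ _) hn)
    omega

/-- Under CH there is a non-rapid almost-rapid p-point. -/
theorem stmt17 (hCH : Cardinal.continuum = Cardinal.aleph 1) :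
    ∃ U : Ultrafilter ℕ, Nonprincipal U ∧ IsPPoint U ∧ AlmostRapid U ∧ ¬ Rapid U := by
  have hCH0 : Cardinal.continuum.{0} = Cardinal.aleph.{0} 1 := by
    apply Cardinal.lift_injective
    rw [Cardinal.lift_continuum, Cardinal.lift_aleph, Ordinal.lift_one]
    exact hCH
  -- enumerate subsets of ℕ
  have hset : #(Set ℕ) = Cardinal.aleph.{0} 1 := by
    rw [Cardinal.mk_set, Cardinal.mk_nat, Cardinal.two_power_aleph0]
    exact hCH0
  have hfun : #(ℕ → ℕ) = Cardinal.aleph.{0} 1 := by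
    rw [← Cardinal.power_def ℕ ℕ, Cardinal.mk_nat, Cardinal.aleph0_power_aleph0]
    exact hCH0
  have hIio : #(Set.Iio ((aleph.{0} 1).ord)) = Cardinal.lift.{1} (Cardinal.aleph.{0} 1) := by
    rw [Ordinal.mk_Iio_ordinal, Cardinal.card_ord]
  have hEA : Nonempty (Set.Iio ((aleph.{0} 1).ord) ≃ Set ℕ) := by
    rw [← Cardinal.lift_mk_eq']
    rw [hIio, hset, Cardinal.lift_lift]
  have hEH : Nonempty (Set.Iio ((aleph.{0} 1).ord) ≃ (ℕ → ℕ)) := by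
    rw [← Cardinal.lift_mk_eq']
    rw [hIio, hfun, Cardinal.lift_lift]
  obtain ⟨EA⟩ := hEA
  obtain ⟨EH⟩ := hEH
  classical
  set As : Ordinal.{0} → Set ℕ :=
    fun o => if h : o < (aleph.{0} 1).ord then EA ⟨o, h⟩ else Set.univ with hAs
  set Hs : Ordinal.{0} → ℕ → ℕ :=
    fun o => if h : o < (aleph.{0} 1).ord then EH ⟨o, h⟩ else id with hHs
  have hAsurj : ∀ A : Set ℕ, ∃ o, o < (aleph.{0} 1).ord ∧ As o = A := by
    intro A
    refine ⟨(EA.symm A).1, (EA.symm A).2, ?_⟩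
    rw [hAs]
    beta_reduce
    rw [dif_pos (show ((EA.symm A : Set.Iio (Cardinal.aleph.{0} 1).ord) : Ordinal.{0}) < (Cardinal.aleph.{0} 1).ord from (EA.symm A).2)]
    calc EA ⟨(EA.symm A).1, (EA.symm A).2⟩ = EA (EA.symm A) := by rw [Subtype.coe_eta]
      _ = A := EA.apply_symm_apply A
  have hHsurj : ∀ g : ℕ → ℕ, ∃ o, o < (aleph.{0} 1).ord ∧ Hs o = g := by
    intro g
    refine ⟨(EH.symm g).1, (EH.symm g).2, ?_⟩
    rw [hHs]
    beta_reduce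
    rw [dif_pos (show ((EH.symm g : Set.Iio (Cardinal.aleph.{0} 1).ord) : Ordinal.{0}) < (Cardinal.aleph.{0} 1).ord from (EH.symm g).2)]
    calc EH ⟨(EH.symm g).1, (EH.symm g).2⟩ = EH (EH.symm g) := by rw [Subtype.coe_eta]
      _ = g := EH.apply_symm_apply g
  apply build_filter (Yb As Hs)
  · intro o ho
    exact (Yb_inv As Hs o ho).1
  · intro o₁ o₂ hle h₂
    rcases eq_or_lt_of_le hle with rfl | hlt
    · simp
    · exact (Yb_inv As Hs o₂ h₂).2.1 o₁ hlt
  · intro A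
    obtain ⟨o, ho, hA⟩ := hAsurj A
    refine ⟨o, ho, ?_⟩
    rw [← hA]
    exact (Yb_inv As Hs o ho).2.2.1
  · intro g
    obtain ⟨o, ho, hg⟩ := hHsurj g
    refine ⟨o, ho, ?_⟩
    rw [← hg]
    exact (Yb_inv As Hs o ho).2.2.2


end Final
end

section
/- For n ∈ ℕ let Pₙ = {1, …, 2ⁿ} ⊆ ℕ, and let I = {A ⊆ ℕ : there exists k such that for all n ≥ 1, |A ∩ Pₙ| ≤ k·n} (an ideal on ℕ). Suppose ⟨Aₙ : n∈ℕ⟩ is a ⊆-decreasing sequence of subsets of ℕ with Aₙ ∉ I for every n, and f : ℕ → ℕ. Then there exists an infinite set B ⊆ ℕ such that: (1) B ∖ Aₙ is finite for every n; (2) B ∉ I; and (3) exp(f_B)(n) > f(n) for every n, where f_B is the increasing enumeration of B. -/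
open Set Filter

/-- The ideal `I = {A : ∃ k, ∀ n ≥ 1, |A ∩ {1,…,2ⁿ}| ≤ k·n}`. -/
def linIdeal : Set (Set ℕ) :=
  {A : Set ℕ | ∃ k : ℕ, ∀ n : ℕ, 1 ≤ n → (A ∩ Icc 1 (2 ^ n)).ncard ≤ k * n}

/-- One can select the `c` largest elements of a finite set of naturals. -/
lemma top_subset (c : ℕ) : ∀ (D : Finset ℕ), c ≤ D.card →
    ∃ C ⊆ D, C.card = c ∧ ∀ x ∈ D \ C, ∀ y ∈ C, x < y := by
  induction c with
  | zero => exact fun D _ => ⟨∅, Finset.empty_subset _, Finset.card_empty, by simp⟩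
  | succ c ih =>
    intro D hc
    have hne : D.Nonempty := Finset.card_pos.mp (by omega)
    set M := D.max' hne with hM
    have hM' : M ∈ D := D.max'_mem hne
    have hcard : c ≤ (D.erase M).card := by
      rw [Finset.card_erase_of_mem hM']; omega
    obtain ⟨C, hCsub, hCcard, hlt⟩ := ih _ hcard
    have hMC : M ∉ C := fun h => (Finset.mem_erase.mp (hCsub h)).1 rfl
    refine ⟨insert M C, ?_, ?_, ?_⟩
    · exact Finset.insert_subset hM' (hCsub.trans (Finset.erase_subset _ _))
    · rw [Finset.card_insert_of_notMem hMC, hCcard]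
    · intro x hx y hy
      obtain ⟨hxD, hxn⟩ := Finset.mem_sdiff.mp hx
      rcases Finset.mem_insert.mp hy with rfl | hyC
      · exact lt_of_le_of_ne (D.le_max' x hxD) (fun h => hxn (by simp [h]))
      · refine hlt x ?_ y hyC
        rw [Finset.mem_sdiff, Finset.mem_erase]
        exact ⟨⟨fun h => hxn (by simp [h]), hxD⟩, fun h => hxn (Finset.mem_insert_of_mem h)⟩

/-- From a `linIdeal`-positive set one can extract a dense chunk all of whose
elements are large. -/
lemma exists_chunk (A0 : Set ℕ) (hpos : A0 ∉ linIdeal) (F : ℕ → ℕ) (m s P : ℕ) :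
    ∃ (C : Finset ℕ) (n : ℕ), 1 ≤ n ∧ (↑C : Set ℕ) ⊆ A0 ∧
      (∀ y ∈ C, 1 ≤ y ∧ y ≤ 2 ^ n) ∧ C.card = m * n + 1 ∧
      ∀ y ∈ C, P < y ∧ F s < y ∧ s + (m * n + 1) < y := by
  simp only [linIdeal, Set.mem_setOf_eq] at hpos
  push_neg at hpos
  set T := P + F s + s + m + 2 with hT
  obtain ⟨N, hN1, hNcard⟩ := hpos (m + T)
  have hfinD : (A0 ∩ Icc 1 (2 ^ N)).Finite := (Set.finite_Icc 1 (2 ^ N)).inter_of_right A0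
  set D := hfinD.toFinset with hD
  have hDcard : D.card = (A0 ∩ Icc 1 (2 ^ N)).ncard :=
    (Set.ncard_eq_toFinset_card _ hfinD).symm
  have hDmem : ∀ x ∈ D, x ∈ A0 ∧ 1 ≤ x ∧ x ≤ 2 ^ N := by
    intro x hx
    have := hfinD.mem_toFinset.mp hx
    exact ⟨this.1, this.2.1, this.2.2⟩
  have hmul : (m + T) * N = m * N + T * N := add_mul m T N
  have hTN : T ≤ T * N := Nat.le_mul_of_pos_right T (by omega)
  have hc : m * N + 1 ≤ D.card := by omega
  obtain ⟨C, hCD, hCcard, htop⟩ := top_subset (m * N + 1) D hc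
  refine ⟨C, N, hN1, ?_, ?_, hCcard, ?_⟩
  · exact fun x hx => (hDmem x (hCD hx)).1
  · exact fun y hy => (hDmem y (hCD hy)).2
  · intro y hy
    have hylb : T * N + 1 ≤ y := by
      have hsd : (D \ C).card = D.card - (m * N + 1) := by
        rw [Finset.card_sdiff_of_subset hCD, hCcard]
      have hsub : D \ C ⊆ Finset.Icc 1 (y - 1) := by
        intro x hx
        have hx1 := (hDmem x ((Finset.sdiff_subset) hx)).2.1
        have := htop x hx y hy
        rw [Finset.mem_Icc]; omega
      have := Finset.card_le_card hsub
      rw [hsd, Nat.card_Icc] at this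
      have hy1 := (hDmem y (hCD hy)).2.1
      omega
    have hsN : (s + m + 2) * N = s * N + m * N + 2 * N := by ring
    have hsN2 : (s + m + 2) * N ≤ T * N := Nat.mul_le_mul_right N (by omega)
    have hs1 : s ≤ s * N := Nat.le_mul_of_pos_right s (by omega)
    exact ⟨by omega, by omega, by omega⟩

/-- Key diagonalization lemma: given a ⊆-decreasing sequence of `linIdeal`-positive sets and
any `f`, there is a `linIdeal`-positive pseudo-intersection `B` with `exp(f_B) > f`. -/
theorem stmt18 (A : ℕ → Set ℕ) (hdec : ∀ n, A (n + 1) ⊆ A n)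
    (hpos : ∀ n, A n ∉ linIdeal) (f : ℕ → ℕ) :
    ∃ B : Set ℕ, B.Infinite ∧ (∀ n, (B \ A n).Finite) ∧ B ∉ linIdeal ∧
      ∀ n, f n < expOnce (enum B) n := by
  classical
  have hchain : ∀ p q : ℕ, p ≤ q → A q ⊆ A p := by
    intro p q hpq
    induction q with
    | zero => have : p = 0 := by omega
              subst this; exact subset_rfl
    | succ k ih =>
      rcases Nat.lt_or_ge p (k + 1) with h | h
      · exact (hdec k).trans (ih (by omega))
      · have : p = k + 1 := by omega
        subst this; exact subset_rfl
  -- the majorant F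
  set F : ℕ → ℕ := fun x => x + 1 + (Finset.range (x + 1)).sup f with hFdef
  have hFmono : Monotone F := by
    intro a b hab
    have : (Finset.range (a + 1)).sup f ≤ (Finset.range (b + 1)).sup f :=
      Finset.sup_mono (Finset.range_subset_range.mpr (by omega))
    simp only [hFdef]; omega
  have hFf : ∀ m, f m < F m := by
    intro m
    have : f m ≤ (Finset.range (m + 1)).sup f :=
      Finset.le_sup (Finset.self_mem_range_succ m)
    simp only [hFdef]; omega
  -- choose chunks
  have hch := fun (m s P : ℕ) => exists_chunk (A m) (hpos m) F m s P
  choose Cf nf hn hsub hbd hcard hgt using hch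
  -- the recursive state: (count so far, max bound so far)
  set St : ℕ → ℕ × ℕ := fun m =>
    Nat.rec (0, 0) (fun m' ih => (ih.1 + (Cf m' ih.1 ih.2).card,
      max ih.2 (2 ^ nf m' ih.1 ih.2))) m with hSt
  set ss : ℕ → ℕ := fun m => (St m).1 with hss
  set PP : ℕ → ℕ := fun m => (St m).2 with hPP
  set CC : ℕ → Finset ℕ := fun m => Cf m (ss m) (PP m) with hCC
  set nn : ℕ → ℕ := fun m => nf m (ss m) (PP m) with hnn
  have hs0 : ss 0 = 0 := rfl
  have hssucc : ∀ m, ss (m + 1) = ss m + (CC m).card := fun m => rfl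
  have hPsucc : ∀ m, PP (m + 1) = max (PP m) (2 ^ nn m) := fun m => rfl
  set B : Set ℕ := ⋃ m, (CC m : Set ℕ) with hB
  have hmemB : ∀ x, x ∈ B ↔ ∃ m, x ∈ CC m := by intro x; simp [hB]
  -- basic chunk properties
  have hcard' : ∀ m, (CC m).card = m * nn m + 1 := fun m => hcard m (ss m) (PP m)
  have hgt' : ∀ m, ∀ y ∈ CC m, PP m < y ∧ F (ss m) < y ∧ ss m + (m * nn m + 1) < y :=
    fun m => hgt m (ss m) (PP m)
  have hbd' : ∀ m, ∀ y ∈ CC m, 1 ≤ y ∧ y ≤ 2 ^ nn m := fun m => hbd m (ss m) (PP m)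
  have hsub' : ∀ m, (↑(CC m) : Set ℕ) ⊆ A m := fun m => hsub m (ss m) (PP m)
  have hn' : ∀ m, 1 ≤ nn m := fun m => hn m (ss m) (PP m)
  have hCne : ∀ m, (CC m).Nonempty := by
    intro m; rw [← Finset.card_pos, hcard']; omega
  have hPmono : Monotone PP := monotone_nat_of_le_succ (fun m => by
    rw [hPsucc]; exact le_max_left _ _)
  have hsmono : Monotone ss := monotone_nat_of_le_succ (fun m => by
    rw [hssucc]; omega)
  have hsm : ∀ m, m ≤ ss m := by
    intro m; induction m with
    | zero => omega
    | succ k ih => rw [hssucc, hcard']; omega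
  have helt : ∀ i m, i < m → ∀ y ∈ CC i, y ≤ PP m := by
    intro i m him y hy
    have h2 := (hbd' i y hy).2
    have : PP (i + 1) ≤ PP m := hPmono him
    rw [hPsucc] at this
    exact le_trans (le_trans h2 (le_max_right _ _)) this
  -- B is infinite
  have hBinf : B.Infinite := by
    intro hfin
    obtain ⟨b, hb⟩ := hfin.bddAbove
    obtain ⟨y, hy⟩ := hCne (b + 1)
    have h1 := (hgt' (b + 1) y hy).1
    have h2 : b + 1 ≤ PP (b + 1) := by
      clear hb h1 hy
      induction b + 1 with
      | zero => omega
      | succ k ih =>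
        obtain ⟨z, hz⟩ := hCne k
        have ha := (hgt' k z hz).1
        have hc := (hbd' k z hz).2
        rw [hPsucc]; omega
    have : y ∈ B := (hmemB y).mpr ⟨b + 1, hy⟩
    have := hb this
    omega
  -- counting: elements of B below PP m number at most ss m
  have hsum : ∀ m, ss m = ∑ i ∈ Finset.range m, (CC i).card := by
    intro m; induction m with
    | zero => simp [hs0]
    | succ k ih => rw [hssucc, Finset.sum_range_succ, ih]
  have hcount : ∀ m, (B ∩ Set.Iic (PP m)).ncard ≤ ss m := by
    intro m
    have hsubU : B ∩ Set.Iic (PP m) ⊆ ↑((Finset.range m).biUnion CC) := by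
      rintro x ⟨hxB, hxle⟩
      obtain ⟨i, hi⟩ := (hmemB x).mp hxB
      have him : i < m := by
        by_contra h
        have : PP m ≤ PP i := hPmono (by omega)
        have := (hgt' i x hi).1
        simp only [Set.mem_Iic] at hxle
        omega
      simp only [Finset.coe_biUnion, Finset.coe_sort_coe, Set.mem_iUnion,
        Finset.mem_coe, Finset.mem_range]
      exact ⟨i, him, hi⟩
    calc (B ∩ Set.Iic (PP m)).ncard
        ≤ (↑((Finset.range m).biUnion CC) : Set ℕ).ncard :=
          Set.ncard_le_ncard hsubU (Finset.finite_toSet _)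
      _ = ((Finset.range m).biUnion CC).card := Set.ncard_coe_finset _
      _ ≤ ∑ i ∈ Finset.range m, (CC i).card := Finset.card_biUnion_le
      _ = ss m := (hsum m).symm
  have henum_mem : ∀ j, enum B j ∈ B := fun j => Nat.nth_mem_of_infinite hBinf j
  have henum_le : ∀ i j, i ≤ j → enum B i ≤ enum B j :=
    fun i j h => (Nat.nth_le_nth hBinf).mpr h
  have henum_inj : Function.Injective (enum B) := Nat.nth_injective hBinf
  -- the enumeration of B escapes each PP m quickly
  have hkey2 : ∀ m j, ss m ≤ j → PP m < enum B j := by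
    intro m j hj
    by_contra h
    push_neg at h
    set T : Finset ℕ := (Finset.Iic j).image (enum B) with hTdef
    have hTcard : T.card = j + 1 := by
      rw [hTdef, Finset.card_image_of_injective _ henum_inj, Nat.card_Iic]
    have hTsub : (↑T : Set ℕ) ⊆ B ∩ Set.Iic (PP m) := by
      intro x hx
      simp only [hTdef, Finset.coe_image, Set.mem_image, Finset.mem_coe,
        Finset.mem_Iic] at hx
      obtain ⟨i, hij, rfl⟩ := hx
      refine ⟨henum_mem i, ?_⟩
      have : enum B i ≤ enum B j := henum_le i j hij
      simp only [Set.mem_Iic]; omega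
    have hfin : (B ∩ Set.Iic (PP m)).Finite :=
      (Set.finite_Iic (PP m)).inter_of_right B
    have := Set.ncard_le_ncard hTsub hfin
    rw [Set.ncard_coe_finset, hTcard] at this
    have := hcount m
    omega
  have hkey3 : ∀ m j, ss m ≤ j → ∃ m', m ≤ m' ∧ enum B j ∈ CC m' := by
    intro m j hj
    obtain ⟨i, hi⟩ := (hmemB _).mp (henum_mem j)
    refine ⟨i, ?_, hi⟩
    by_contra h
    have := helt i m (by omega) _ hi
    have := hkey2 m j hj
    omega
  have claimA : ∀ m j, ss m ≤ j → F (ss m) < enum B j := by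
    intro m j hj
    obtain ⟨m', hm', hmem⟩ := hkey3 m j hj
    have h1 := (hgt' m' _ hmem).2.1
    have h2 : F (ss m) ≤ F (ss m') := hFmono (hsmono hm')
    omega
  have claimB : ∀ m j, ss m ≤ j → ss (m + 1) ≤ enum B j := by
    intro m j hj
    obtain ⟨m', hm', hmem⟩ := hkey3 m j hj
    have h1 := (hgt' m' _ hmem).2.2
    have h2 : ss (m + 1) ≤ ss (m' + 1) := hsmono (show m + 1 ≤ m' + 1 by omega)
    have e1 : ss (m + 1) = ss m + (m * nn m + 1) := by rw [hssucc, hcard']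
    have e2 : ss (m' + 1) = ss m' + (m' * nn m' + 1) := by rw [hssucc, hcard']
    omega
  -- assemble
  refine ⟨B, hBinf, ?_, ?_, ?_⟩
  · -- pseudo-intersection
    intro k
    refine Set.Finite.subset (Finset.finite_toSet ((Finset.range k).biUnion CC)) ?_
    rintro x ⟨hxB, hxA⟩
    obtain ⟨i, hi⟩ := (hmemB x).mp hxB
    have hik : i < k := by
      by_contra h
      exact hxA (hchain k i (by omega) (hsub' i hi))
    simp only [Finset.coe_biUnion, Finset.coe_sort_coe, Set.mem_iUnion,
      Finset.mem_coe, Finset.mem_range]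
    exact ⟨i, hik, hi⟩
  · -- B is linIdeal-positive
    rintro ⟨k, hk⟩
    have h1 := hk (nn k) (hn' k)
    have hCsub : (↑(CC k) : Set ℕ) ⊆ B ∩ Icc 1 (2 ^ nn k) := by
      intro y hy
      have := hbd' k y hy
      exact ⟨(hmemB y).mpr ⟨k, hy⟩, this.1, this.2⟩
    have hfin : (B ∩ Icc 1 (2 ^ nn k)).Finite :=
      (Set.finite_Icc 1 (2 ^ nn k)).inter_of_right B
    have := Set.ncard_le_ncard hCsub hfin
    rw [Set.ncard_coe_finset, hcard'] at this
    omega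
  · -- the exponential domination
    have main : ∀ k, ss (k + 1) ≤ expOnce (enum B) k ∧ f k < expOnce (enum B) k := by
      intro k
      induction k with
      | zero =>
        have h0 : ss 0 ≤ 0 := by omega
        constructor
        · exact claimB 0 0 h0
        · have h1 := claimA 0 0 h0
          have h2 := hFf 0
          have h3 : F 0 ≤ F (ss 0) := hFmono (by omega)
          show f 0 < enum B 0
          omega
      | succ k ih =>
        obtain ⟨ih1, _⟩ := ih
        have hA := claimA (k + 1) _ ih1
        have hB' := claimB (k + 1) _ ih1
        have hf1 : f (k + 1) < F (k + 1) := hFf (k + 1)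
        have hf2 : F (k + 1) ≤ F (ss (k + 1)) := hFmono (hsm (k + 1))
        refine ⟨hB', ?_⟩
        show f (k + 1) < enum B (expOnce (enum B) k)
        omega
    exact fun k => (main k).2
end
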